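/- arXiv:2503.18044 — 6 statements merged into one kernel-verified Lean document; each statement's English description precedes it below -/
import Mathlib

section
/- Let G be a finite simple graph on n ≥ 3 vertices and let e be an edge of G. Then the signless Laplacian eigenvalues of G and of G − e interlace: κ_1(G) ≥ κ_1(G−e) ≥ κ_2(G) ≥ κ_2(G−e) ≥ ... ≥ κ_n(G) ≥ κ_n(G−e) ≥ 0, where κ_1 ≥ ... ≥ κ_n are the signless Laplacian eigenvalues in nonincreasing order. -/
open SimpleGraph Matrix Finset
attribute [local instance] Classical.propDecidable
set_option linter.unnecessarySimpa false

/-- The signless Laplacian matrix `Q(G) = D(G) + A(G)`. -/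
noncomputable def signlessLaplacian {V : Type*} [Fintype V] (G : SimpleGraph V) :
    Matrix V V ℝ :=
  Matrix.diagonal (fun v => (G.degree v : ℝ)) + G.adjMatrix ℝ

/-- The multiset of eigenvalues of a Hermitian real matrix. -/
noncomputable def eigMultiset {V : Type*} [Fintype V] [DecidableEq V]
    {M : Matrix V V ℝ} (hM : M.IsHermitian) : Multiset ℝ :=
  Finset.univ.val.map hM.eigenvalues

/-- The `i`-th largest eigenvalue (0-indexed) of a Hermitian real matrix. -/
noncomputable def ithEig {V : Type*} [Fintype V] [DecidableEq V]
    {M : Matrix V V ℝ} (hM : M.IsHermitian) (i : ℕ) : ℝ :=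
  ((eigMultiset hM).sort (· ≥ ·)).getD i 0

/-- The join `G ∨ H` of two graphs. -/
def joinG {α β : Type*} (G : SimpleGraph α) (H : SimpleGraph β) : SimpleGraph (α ⊕ β) where
  Adj x y :=
    match x, y with
    | Sum.inl a, Sum.inl b => G.Adj a b
    | Sum.inr a, Sum.inr b => H.Adj a b
    | Sum.inl _, Sum.inr _ => True
    | Sum.inr _, Sum.inl _ => True
  symm := by
    constructor
    rintro (a | a) (b | b) h <;> simp_all <;> exact h.symm
  loopless := by constructor; rintro (a | a) h <;> simp_all

/-- The disjoint union `G ∪ H` of two graphs. -/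
def sumG {α β : Type*} (G : SimpleGraph α) (H : SimpleGraph β) : SimpleGraph (α ⊕ β) where
  Adj x y :=
    match x, y with
    | Sum.inl a, Sum.inl b => G.Adj a b
    | Sum.inr a, Sum.inr b => H.Adj a b
    | _, _ => False
  symm := by
    constructor
    rintro (a | a) (b | b) h <;> simp_all <;> exact h.symm
  loopless := by constructor; rintro (a | a) h <;> simp_all

/-- The disjoint union of cycles `C_{l 0} ∪ ⋯ ∪ C_{l (t-1)}`. -/
def cyclesUnion (t : ℕ) (l : Fin t → ℕ) : SimpleGraph (Σ i : Fin t, Fin (l i)) where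
  Adj x y := ∃ h : x.1 = y.1, (cycleGraph (l y.1)).Adj (h ▸ x.2) y.2
  symm := by
    constructor
    rintro ⟨i, a⟩ ⟨j, b⟩ ⟨h, hadj⟩
    dsimp only at h hadj ⊢
    subst h
    exact ⟨rfl, hadj.symm⟩
  loopless := by
    constructor
    rintro ⟨i, a⟩ ⟨h, hadj⟩
    dsimp only at h hadj
    rw [eq_self_iff_true] at h
    exact (cycleGraph (l i)).loopless.irrefl a (by simpa using hadj)

/-!
The signless Laplacian factors as `Q(G) = N Nᵀ` through the vertex–edge incidence matrix `N`,
so it is positive semidefinite, and deleting `e` deletes the column `N e`: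
`Q(G) = Q(G - e) + (N e) (N e)ᵀ`. Interlacing then holds for every rank-one positive
perturbation `T = S + w wᵀ` of a symmetric operator, by Courant–Fischer: the quadratic form of `S`
is at most that of `T` everywhere and equal to it on the hyperplane `w⊥`, and comparing quadratic
forms on a subspace of codimension `k` moves eigenvalue indices by at most `k`.
-/

open Module Submodule InnerProductSpace

theorem OrthonormalBasis.finrank_span_image {ι 𝕜 E : Type*} [Fintype ι] [RCLike 𝕜]
    [NormedAddCommGroup E] [InnerProductSpace 𝕜 E] (b : OrthonormalBasis ι 𝕜 E) (s : Finset ι) :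
    finrank 𝕜 (span 𝕜 (b '' s)) = s.card := by
  have hs : b '' s = Set.range (b ∘ ((↑) : s → ι)) := by
    rw [Set.range_comp, Subtype.range_coe]
  rw [hs, finrank_span_eq_card (b.orthonormal.linearIndependent.comp _ Subtype.val_injective),
    Fintype.card_coe]

namespace LinearMap.IsSymmetric

variable {𝕜 E : Type*} [RCLike 𝕜] [NormedAddCommGroup E] [InnerProductSpace 𝕜 E]
  [FiniteDimensional 𝕜 E] {T S : E →ₗ[𝕜] E} {n : ℕ}

lemma re_inner_apply_self_eq_sum (hT : T.IsSymmetric) (hn : finrank 𝕜 E = n) (x : E) :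
    RCLike.re ⟪T x, x⟫_𝕜 =
      ∑ i, hT.eigenvalues hn i * ‖⟪hT.eigenvectorBasis hn i, x⟫_𝕜‖ ^ 2 := by
  rw [← (hT.eigenvectorBasis hn).sum_inner_mul_inner, map_sum]
  refine Finset.sum_congr rfl fun i _ => ?_
  rw [hT, hT.apply_eigenvectorBasis, inner_smul_right, ← inner_conj_symm x, mul_assoc,
    RCLike.conj_mul]
  norm_cast

lemma inner_eigenvectorBasis_eq_zero_of_mem_span (hT : T.IsSymmetric) (hn : finrank 𝕜 E = n)
    {s : Set (Fin n)} {x : E} (hx : x ∈ span 𝕜 (hT.eigenvectorBasis hn '' s)) {j : Fin n}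
    (hj : j ∉ s) : ⟪hT.eigenvectorBasis hn j, x⟫_𝕜 = 0 := by
  rw [← OrthonormalBasis.coe_toBasis, Basis.mem_span_image] at hx
  rw [← OrthonormalBasis.repr_apply_apply, ← OrthonormalBasis.coe_toBasis_repr_apply]
  exact Finsupp.notMem_support_iff.mp fun h => hj (hx h)

lemma mul_norm_sq_le_re_inner_of_mem_span (hT : T.IsSymmetric) (hn : finrank 𝕜 E = n)
    {s : Set (Fin n)} {c : ℝ} (hc : ∀ j ∈ s, c ≤ hT.eigenvalues hn j) {x : E}
    (hx : x ∈ span 𝕜 (hT.eigenvectorBasis hn '' s)) : c * ‖x‖ ^ 2 ≤ RCLike.re ⟪T x, x⟫_𝕜 := by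
  rw [hT.re_inner_apply_self_eq_sum hn, ← (hT.eigenvectorBasis hn).sum_sq_norm_inner_right,
    Finset.mul_sum]
  refine Finset.sum_le_sum fun j _ => ?_
  by_cases hj : j ∈ s
  · exact mul_le_mul_of_nonneg_right (hc j hj) (sq_nonneg _)
  · simp [hT.inner_eigenvectorBasis_eq_zero_of_mem_span hn hx hj]

lemma re_inner_le_mul_norm_sq_of_mem_span (hT : T.IsSymmetric) (hn : finrank 𝕜 E = n)
    {s : Set (Fin n)} {c : ℝ} (hc : ∀ j ∈ s, hT.eigenvalues hn j ≤ c) {x : E}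
    (hx : x ∈ span 𝕜 (hT.eigenvectorBasis hn '' s)) : RCLike.re ⟪T x, x⟫_𝕜 ≤ c * ‖x‖ ^ 2 := by
  rw [hT.re_inner_apply_self_eq_sum hn, ← (hT.eigenvectorBasis hn).sum_sq_norm_inner_right,
    Finset.mul_sum]
  refine Finset.sum_le_sum fun j _ => ?_
  by_cases hj : j ∈ s
  · exact mul_le_mul_of_nonneg_right (hc j hj) (sq_nonneg _)
  · simp [hT.inner_eigenvectorBasis_eq_zero_of_mem_span hn hx hj]

lemma exists_finrank_eq_forall_eigenvalues_mul_le (hT : T.IsSymmetric) (hn : finrank 𝕜 E = n)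
    (i : Fin n) : ∃ U : Submodule 𝕜 E, finrank 𝕜 U = i + 1 ∧
      ∀ x ∈ U, hT.eigenvalues hn i * ‖x‖ ^ 2 ≤ RCLike.re ⟪T x, x⟫_𝕜 := by
  refine ⟨span 𝕜 (hT.eigenvectorBasis hn '' (Finset.Iic i : Set (Fin n))), ?_, fun x hx => ?_⟩
  · rw [OrthonormalBasis.finrank_span_image, Fin.card_Iic]
  · exact hT.mul_norm_sq_le_re_inner_of_mem_span hn
      (fun j hj => hT.eigenvalues_antitone hn (Finset.mem_Iic.mp hj)) hx

lemma le_eigenvalues_of_forall_mul_le (hT : T.IsSymmetric) (hn : finrank 𝕜 E = n)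
    {U : Submodule 𝕜 E} {i : Fin n} (hU : i + 1 ≤ finrank 𝕜 U) {c : ℝ}
    (hc : ∀ x ∈ U, c * ‖x‖ ^ 2 ≤ RCLike.re ⟪T x, x⟫_𝕜) : c ≤ hT.eigenvalues hn i := by
  set V := span 𝕜 (hT.eigenvectorBasis hn '' (Finset.Ici i : Set (Fin n)))
  have hV : finrank 𝕜 V = n - i := by
    rw [OrthonormalBasis.finrank_span_image, Fin.card_Ici]
  obtain ⟨x, hxU, hxV, hx⟩ : ∃ x ∈ U, x ∈ V ∧ x ≠ 0 := by
    have hUV : ¬Disjoint U V := fun h => by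
      have := Submodule.finrank_add_finrank_le_of_disjoint h
      omega
    simpa [Submodule.disjoint_def] using hUV
  have hle : c * ‖x‖ ^ 2 ≤ hT.eigenvalues hn i * ‖x‖ ^ 2 :=
    (hc x hxU).trans <| hT.re_inner_le_mul_norm_sq_of_mem_span hn
      (fun j hj => hT.eigenvalues_antitone hn (Finset.mem_Ici.mp hj)) hxV
  exact le_of_mul_le_mul_right hle (by positivity)

theorem eigenvalues_le_eigenvalues_of_re_inner_le (hT : T.IsSymmetric) (hS : S.IsSymmetric)
    (hn : finrank 𝕜 E = n) {W : Submodule 𝕜 E} {k : ℕ} (hW : n ≤ finrank 𝕜 W + k)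
    (hTS : ∀ x ∈ W, RCLike.re ⟪T x, x⟫_𝕜 ≤ RCLike.re ⟪S x, x⟫_𝕜) {i j : Fin n}
    (hij : (i : ℕ) + k ≤ j) : hT.eigenvalues hn j ≤ hS.eigenvalues hn i := by
  obtain ⟨U, hU, hTU⟩ := hT.exists_finrank_eq_forall_eigenvalues_mul_le hn j
  refine hS.le_eigenvalues_of_forall_mul_le hn (U := U ⊓ W) ?_
    fun x hx => (hTU x hx.1).trans (hTS x hx.2)
  have := Submodule.finrank_sup_add_finrank_inf_eq U W
  have := (U ⊔ W).finrank_le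
  omega

omit [FiniteDimensional 𝕜 E] in
lemma re_inner_add_rankOne_apply_self (S : E →ₗ[𝕜] E) (w x : E) :
    RCLike.re ⟪(S + (rankOne 𝕜 w w : E →ₗ[𝕜] E)) x, x⟫_𝕜 =
      RCLike.re ⟪S x, x⟫_𝕜 + ‖⟪w, x⟫_𝕜‖ ^ 2 := by
  rw [LinearMap.add_apply, inner_add_left, map_add, ContinuousLinearMap.coe_coe, rankOne_apply,
    inner_smul_left, RCLike.conj_mul]
  norm_cast

theorem eigenvalues_le_of_eq_add_rankOne (hT : T.IsSymmetric) (hS : S.IsSymmetric)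
    (hn : finrank 𝕜 E = n) {w : E} (hTS : T = S + (rankOne 𝕜 w w : E →ₗ[𝕜] E)) (i : Fin n) :
    hS.eigenvalues hn i ≤ hT.eigenvalues hn i := by
  refine hS.eigenvalues_le_eigenvalues_of_re_inner_le hT hn (W := ⊤) (k := 0)
    (by rw [finrank_top, hn, add_zero]) (fun x _ => ?_) le_rfl
  rw [hTS, re_inner_add_rankOne_apply_self]
  exact le_add_of_nonneg_right (sq_nonneg _)

theorem eigenvalues_le_of_eq_add_rankOne_of_lt (hT : T.IsSymmetric) (hS : S.IsSymmetric)
    (hn : finrank 𝕜 E = n) {w : E} (hTS : T = S + (rankOne 𝕜 w w : E →ₗ[𝕜] E)) {i j : Fin n}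
    (hij : i < j) : hT.eigenvalues hn j ≤ hS.eigenvalues hn i := by
  refine hT.eigenvalues_le_eigenvalues_of_re_inner_le hS hn (W := (𝕜 ∙ w)ᗮ) (k := 1) ?_
    (fun x hx => ?_) hij
  · have := (𝕜 ∙ w).finrank_add_finrank_orthogonal
    have := finrank_span_le_card (R := 𝕜) ({w} : Set E)
    rw [Set.toFinset_singleton, Finset.card_singleton] at this
    omega
  · rw [hTS, re_inner_add_rankOne_apply_self,
      Submodule.mem_orthogonal_singleton_iff_inner_right.mp hx, norm_zero]
    simp

end LinearMap.IsSymmetric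

theorem Matrix.toEuclideanLin_vecMulVec_star {𝕜 m n : Type*} [RCLike 𝕜] [Fintype m] [Fintype n]
    [DecidableEq n] (v : m → 𝕜) (w : n → 𝕜) :
    toEuclideanLin (vecMulVec v (star w)) = rankOne 𝕜 (WithLp.toLp 2 v) (WithLp.toLp 2 w) := by
  rw [← symm_toEuclideanLin_rankOne, LinearEquiv.apply_symm_apply]

namespace Matrix.IsHermitian

variable {𝕜 m : Type*} [RCLike 𝕜] [Fintype m] [DecidableEq m] {A B : Matrix m m 𝕜}

theorem eigenvalues₀_le_of_eq_add_vecMulVec (hA : A.IsHermitian)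
    (hB : B.IsHermitian) {w : m → 𝕜} (hAB : B = A + vecMulVec w (star w))
    (i : Fin (Fintype.card m)) : hA.eigenvalues₀ i ≤ hB.eigenvalues₀ i :=
  LinearMap.IsSymmetric.eigenvalues_le_of_eq_add_rankOne _ _ _
    (by rw [hAB, map_add, toEuclideanLin_vecMulVec_star]) i

theorem eigenvalues₀_le_of_eq_add_vecMulVec_of_lt (hA : A.IsHermitian)
    (hB : B.IsHermitian) {w : m → 𝕜} (hAB : B = A + vecMulVec w (star w))
    {i j : Fin (Fintype.card m)} (hij : i < j) : hB.eigenvalues₀ j ≤ hA.eigenvalues₀ i :=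
  LinearMap.IsSymmetric.eigenvalues_le_of_eq_add_rankOne_of_lt _ _ _
    (by rw [hAB, map_add, toEuclideanLin_vecMulVec_star]) hij

end Matrix.IsHermitian

section SortedEigenvalues

variable {V : Type*} [Fintype V] [DecidableEq V] {M : Matrix V V ℝ}

theorem ithEig_eq_eigenvalues₀ (hM : M.IsHermitian) {i : ℕ} (hi : i < Fintype.card V) :
    ithEig hM i = hM.eigenvalues₀ ⟨i, hi⟩ := by
  have hsort : (eigMultiset hM).sort (· ≥ ·) = List.ofFn hM.eigenvalues₀ := by
    rw [← hM.sort_roots_charpoly_eq_eigenvalues₀, hM.roots_charpoly_eq_eigenvalues,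
      Multiset.map_map]
    rfl
  rw [ithEig, hsort, List.getD_eq_getElem?_getD, List.getElem?_ofFn]
  simp [hi]

theorem ithEig_nonneg (hM : M.IsHermitian) (hM' : M.PosSemidef) (i : ℕ) : 0 ≤ ithEig hM i := by
  rw [ithEig, List.getD_eq_getElem?_getD]
  rcases h : ((eigMultiset hM).sort (· ≥ ·))[i]? with _ | x
  · exact le_rfl
  · obtain ⟨j, -, rfl⟩ := Multiset.mem_map.mp
      ((Multiset.mem_sort _).mp (List.mem_of_getElem? h))
    exact hM'.eigenvalues_nonneg j

end SortedEigenvalues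

section SignlessLaplacian

variable {V : Type*} [Fintype V] [DecidableEq V]

theorem signlessLaplacian_eq_incMatrix_mul_transpose (G : SimpleGraph V) [DecidableRel G.Adj] :
    signlessLaplacian G = G.incMatrix ℝ * (G.incMatrix ℝ)ᵀ := by
  rw [incMatrix_mul_transpose]
  ext a b
  by_cases hab : a = b
  · subst hab
    simp only [signlessLaplacian, Matrix.add_apply, diagonal_apply_eq, adjMatrix_apply,
      G.irrefl, if_false, add_zero, of_apply, if_true]
    congr!
  · simp [signlessLaplacian, hab]

theorem posSemidef_signlessLaplacian (G : SimpleGraph V) : (signlessLaplacian G).PosSemidef := by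
  rw [signlessLaplacian_eq_incMatrix_mul_transpose, ← conjTranspose_eq_transpose_of_trivial]
  exact posSemidef_self_mul_conjTranspose _

omit [Fintype V] in
theorem SimpleGraph.incMatrix_deleteEdges_singleton_apply {R : Type*} [Zero R] [One R]
    (G : SimpleGraph V) [DecidableRel G.Adj] (e f : Sym2 V) (a : V) :
    (G.deleteEdges {e}).incMatrix R a f = if f = e then 0 else G.incMatrix R a f := by
  by_cases hf : f = e <;>
    simp [incMatrix_apply, incidenceSet, edgeSet_deleteEdges, hf, Set.indicator_apply]

theorem signlessLaplacian_eq_deleteEdges_add_vecMulVec (G : SimpleGraph V) [DecidableRel G.Adj]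
    (e : Sym2 V) :
    signlessLaplacian G = signlessLaplacian (G.deleteEdges {e}) +
      vecMulVec ((G.incMatrix ℝ)ᵀ e) ((G.incMatrix ℝ)ᵀ e) := by
  simp only [signlessLaplacian_eq_incMatrix_mul_transpose]
  ext a b
  have hsplit : ∀ f, G.incMatrix ℝ a f * G.incMatrix ℝ b f =
      (G.deleteEdges {e}).incMatrix ℝ a f * (G.deleteEdges {e}).incMatrix ℝ b f +
        if f = e then G.incMatrix ℝ a e * G.incMatrix ℝ b e else 0 := by
    intro f
    by_cases hf : f = e <;> simp [G.incMatrix_deleteEdges_singleton_apply, hf]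
  simp only [Matrix.add_apply, mul_apply, transpose_apply, vecMulVec_apply]
  rw [Finset.sum_congr rfl fun f _ => hsplit f, Finset.sum_add_distrib, Finset.sum_ite_eq',
    if_pos (Finset.mem_univ e)]

end SignlessLaplacian

theorem interlacing_deleteEdge_general {V : Type*} [Fintype V] [DecidableEq V]
    (G : SimpleGraph V) (e : Sym2 V)
    (hQ : (signlessLaplacian G).IsHermitian)
    (hQ' : (signlessLaplacian (G.deleteEdges {e})).IsHermitian) :
    (∀ i, i < Fintype.card V →
      ithEig hQ' i ≤ ithEig hQ i ∧
        (i + 1 < Fintype.card V → ithEig hQ (i + 1) ≤ ithEig hQ' i)) ∧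
      0 ≤ ithEig hQ' (Fintype.card V - 1) := by
  obtain ⟨w, hQQ'⟩ : ∃ w : V → ℝ, signlessLaplacian G =
      signlessLaplacian (G.deleteEdges {e}) + vecMulVec w (star w) :=
    ⟨_, (signlessLaplacian_eq_deleteEdges_add_vecMulVec G e).trans (by rw [star_trivial])⟩
  refine ⟨fun i hi => ⟨?_, fun hi' => ?_⟩,
    ithEig_nonneg hQ' (posSemidef_signlessLaplacian _) _⟩
  · rw [ithEig_eq_eigenvalues₀ hQ' hi, ithEig_eq_eigenvalues₀ hQ hi]
    exact hQ'.eigenvalues₀_le_of_eq_add_vecMulVec hQ hQQ' _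
  · rw [ithEig_eq_eigenvalues₀ hQ hi', ithEig_eq_eigenvalues₀ hQ' hi]
    exact hQ'.eigenvalues₀_le_of_eq_add_vecMulVec_of_lt hQ hQQ' (Nat.lt_succ_self i)

theorem interlacing_deleteEdge {V : Type*} [Fintype V] [DecidableEq V]
    (G : SimpleGraph V) (hn : 3 ≤ Fintype.card V) (e : Sym2 V) (he : e ∈ G.edgeSet)
    (hQ : (signlessLaplacian G).IsHermitian)
    (hQ' : (signlessLaplacian (G.deleteEdges {e})).IsHermitian) :
    (∀ i, i < Fintype.card V →
      ithEig hQ' i ≤ ithEig hQ i ∧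
        (i + 1 < Fintype.card V → ithEig hQ (i + 1) ≤ ithEig hQ' i)) ∧
      0 ≤ ithEig hQ' (Fintype.card V - 1) :=
  interlacing_deleteEdge_general G e hQ hQ'
end

section
/- Let G be a finite simple graph, U = {u_1, ..., u_s} a subset of its vertices, and H = G[U] the induced subgraph. If 0 ≤ c_j ≤ d_G(u_j) for all j, then for every 1 ≤ i ≤ s, the i-th largest signless Laplacian eigenvalue of G satisfies κ_i(G) ≥ θ_i(diag(c_1,...,c_s) + A(H)), where θ_i denotes the i-th largest eigenvalue of the indicated s × s symmetric matrix. -/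
open SimpleGraph Matrix Finset
attribute [local instance] Classical.propDecidable
set_option linter.unnecessarySimpa false

/-!
The principal submatrix `Q[U] = diag(d_G(u_j)) + A(H)` of `Q(G)` dominates
`diag(c) + A(H)` in the Loewner order, so the bound is an instance of Cauchy interlacing combined
with Weyl monotonicity: if `A[U] - B` is positive semidefinite, then `λ_i(B) ≤ λ_i(A)`.
This is proved by a dimension count. If `B` had more eigenvalues `≥ θ` than `A`, the span of the
corresponding eigenvectors of `B`, pushed into the ambient space by extension by zero, would meet
the span of the eigenvectors of `A` with eigenvalues `< θ` in a nonzero vector `x`, and then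
`θ |x|² ≤ xᵀ B x ≤ xᵀ A x < θ |x|²`.
-/

theorem List.Pairwise.le_getD_iff_lt_countP {L : List ℝ} (hL : L.Pairwise (· ≥ ·)) {i : ℕ}
    (hi : i < L.length) (θ : ℝ) : θ ≤ L.getD i 0 ↔ i < L.countP (θ ≤ ·) := by
  induction L generalizing i with
  | nil => simp at hi
  | cons x L ih =>
    rw [List.pairwise_cons] at hL
    by_cases hx : θ ≤ x
    · cases i with
      | zero => simp [hx]
      | succ i =>
        rw [List.getD_cons_succ, List.countP_cons_of_pos (by simpa using hx),
          ih hL.2 (by simpa using hi)]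
        omega
    · have hlt : ∀ y ∈ x :: L, ¬ θ ≤ y := by
        simp only [List.mem_cons, forall_eq_or_imp]
        exact ⟨hx, fun y hy hθ => hx (hθ.trans (hL.1 y hy))⟩
      rw [List.countP_eq_zero.mpr (by simpa using hlt), List.getD_eq_getElem _ _ hi]
      simpa using hlt _ (List.getElem_mem hi)

theorem le_ithEig_iff {ι : Type*} [Fintype ι] [DecidableEq ι] {A : Matrix ι ι ℝ}
    (hA : A.IsHermitian) {i : ℕ} (hi : i < Fintype.card ι) (θ : ℝ) :
    θ ≤ ithEig hA i ↔ i < #{j | θ ≤ hA.eigenvalues j} := by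
  have hsorted := Multiset.pairwise_sort (eigMultiset hA) (· ≥ ·)
  rw [ithEig, hsorted.le_getD_iff_lt_countP (by simpa [eigMultiset] using hi),
    ← Multiset.coe_countP, Multiset.sort_eq, eigMultiset, Multiset.countP_map, Finset.card_filter]
  simp [Finset.filter]

section Extend

variable {κ ι R : Type*} [Fintype κ] [Fintype ι] {u : κ → ι}

open Function

theorem Function.Injective.extend_zero_dotProduct [NonUnitalNonAssocSemiring R]
    (hu : Injective u) (y : κ → R) (z : ι → R) : extend u y 0 ⬝ᵥ z = y ⬝ᵥ (z ∘ u) :=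
  (Fintype.sum_of_injective u hu _ _
    (fun v hv => by simp [extend_apply' _ _ _ fun ⟨j, hj⟩ => hv ⟨j, hj⟩])
    (fun j => by simp [hu.extend_apply])).symm

theorem Function.Injective.extend_zero_dotProduct_mulVec [CommSemiring R] (hu : Injective u)
    (A : Matrix ι ι R) (y : κ → R) :
    extend u y 0 ⬝ᵥ A *ᵥ extend u y 0 = y ⬝ᵥ A.submatrix u u *ᵥ y := by
  rw [hu.extend_zero_dotProduct]
  congr 1
  ext j
  rw [Function.comp_apply, mulVec, mulVec, dotProduct_comm, hu.extend_zero_dotProduct,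
    dotProduct_comm]
  rfl

theorem Matrix.PosSemidef.dotProduct_mulVec_le_extend_zero {A : Matrix ι ι ℝ} {B : Matrix κ κ ℝ}
    (hBA : (A.submatrix u u - B).PosSemidef) (hu : Injective u) (y : κ → ℝ) :
    y ⬝ᵥ B *ᵥ y ≤ extend u y 0 ⬝ᵥ A *ᵥ extend u y 0 := by
  have := hBA.dotProduct_mulVec_nonneg y
  rw [star_trivial, sub_mulVec, dotProduct_sub, sub_nonneg] at this
  rwa [hu.extend_zero_dotProduct_mulVec]

end Extend

theorem Matrix.unitaryGroup_mulVec_dotProduct_mulVec {ι : Type*} [Fintype ι] [DecidableEq ι]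
    {U : Matrix ι ι ℝ} (hU : U ∈ unitaryGroup ι ℝ) (a b : ι → ℝ) :
    (U *ᵥ a) ⬝ᵥ (U *ᵥ b) = a ⬝ᵥ b := by
  rw [dotProduct_mulVec, ← mulVec_transpose, ← conjTranspose_eq_transpose_of_trivial,
    ← star_eq_conjTranspose, mulVec_mulVec, mem_unitaryGroup_iff'.mp hU, one_mulVec,
    dotProduct_comm]

namespace Matrix.IsHermitian

variable {κ ι : Type*} [Fintype κ] [DecidableEq κ] [Fintype ι] [DecidableEq ι]
  {A : Matrix ι ι ℝ} {B : Matrix κ κ ℝ}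

theorem mul_eigenvectorUnitary (hA : A.IsHermitian) :
    A * hA.eigenvectorUnitary = hA.eigenvectorUnitary * diagonal hA.eigenvalues := by
  have hspec := hA.spectral_theorem
  rw [Unitary.conjStarAlgAut_apply] at hspec
  calc A * hA.eigenvectorUnitary
      = _ := congrArg (· * (hA.eigenvectorUnitary : Matrix ι ι ℝ)) hspec
    _ = _ := by simp [mul_assoc]

theorem eigenvectorUnitary_mulVec_dotProduct_mulVec (hA : A.IsHermitian) (w : ι → ℝ) :
    ((hA.eigenvectorUnitary : Matrix ι ι ℝ) *ᵥ w) ⬝ᵥ A *ᵥ (hA.eigenvectorUnitary *ᵥ w) =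
      ∑ v, hA.eigenvalues v * (w v * w v) := by
  rw [mulVec_mulVec, hA.mul_eigenvectorUnitary, ← mulVec_mulVec,
    unitaryGroup_mulVec_dotProduct_mulVec hA.eigenvectorUnitary.2]
  simp only [dotProduct, mulVec_diagonal]
  exact Finset.sum_congr rfl fun v _ => by ring

theorem mul_dotProduct_self_le_of_le_eigenvalues (hA : A.IsHermitian) {θ : ℝ} {w : ι → ℝ}
    (hw : ∀ v, w v ≠ 0 → θ ≤ hA.eigenvalues v) :
    θ * (((hA.eigenvectorUnitary : Matrix ι ι ℝ) *ᵥ w) ⬝ᵥ (hA.eigenvectorUnitary *ᵥ w)) ≤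
      ((hA.eigenvectorUnitary : Matrix ι ι ℝ) *ᵥ w) ⬝ᵥ A *ᵥ (hA.eigenvectorUnitary *ᵥ w) := by
  rw [unitaryGroup_mulVec_dotProduct_mulVec hA.eigenvectorUnitary.2,
    hA.eigenvectorUnitary_mulVec_dotProduct_mulVec, dotProduct, Finset.mul_sum]
  refine Finset.sum_le_sum fun v _ => ?_
  by_cases hv : w v = 0
  · simp [hv]
  · exact mul_le_mul_of_nonneg_right (hw v hv) (mul_self_nonneg _)

theorem dotProduct_mulVec_lt_of_eigenvalues_lt (hA : A.IsHermitian) {θ : ℝ} {w : ι → ℝ}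
    (hw0 : w ≠ 0) (hw : ∀ v, w v ≠ 0 → hA.eigenvalues v < θ) :
    ((hA.eigenvectorUnitary : Matrix ι ι ℝ) *ᵥ w) ⬝ᵥ A *ᵥ (hA.eigenvectorUnitary *ᵥ w) <
      θ * (((hA.eigenvectorUnitary : Matrix ι ι ℝ) *ᵥ w) ⬝ᵥ (hA.eigenvectorUnitary *ᵥ w)) := by
  rw [unitaryGroup_mulVec_dotProduct_mulVec hA.eigenvectorUnitary.2,
    hA.eigenvectorUnitary_mulVec_dotProduct_mulVec, dotProduct, Finset.mul_sum]
  obtain ⟨v₀, hv₀⟩ := Function.ne_iff.mp hw0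
  refine Finset.sum_lt_sum (fun v _ => ?_) ⟨v₀, Finset.mem_univ _, ?_⟩
  · by_cases hv : w v = 0
    · simp [hv]
    · exact mul_le_mul_of_nonneg_right (hw v hv).le (mul_self_nonneg _)
  · exact mul_lt_mul_of_pos_right (hw v₀ hv₀) (mul_self_pos.mpr hv₀)

open Function in
theorem card_le_eigenvalues_le_of_posSemidef_submatrix_sub (hA : A.IsHermitian)
    (hB : B.IsHermitian) {u : κ → ι} (hu : Injective u) (hBA : (A.submatrix u u - B).PosSemidef)
    (θ : ℝ) : #{j | θ ≤ hB.eigenvalues j} ≤ #{v | θ ≤ hA.eigenvalues v} := by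
  by_contra! hlt
  set T : Finset κ := {j | θ ≤ hB.eigenvalues j}
  set S : Finset ι := {v | θ ≤ hA.eigenvalues v}
  set UA : Matrix ι ι ℝ := (hA.eigenvectorUnitary : Matrix ι ι ℝ)
  set UB : Matrix κ κ ℝ := (hB.eigenvectorUnitary : Matrix κ κ ℝ)
  -- A kernel vector of `φ` gives a combination `y` of eigenvectors of `B` with eigenvalues `≥ θ`
  -- whose extension `x` by zero has no component along eigenvectors of `A` with eigenvalues `≥ θ`.
  let φ : (T → ℝ) →ₗ[ℝ] (S → ℝ) :=
    LinearMap.funLeft ℝ ℝ ((↑) : S → ι) ∘ₗ mulVecLin (star UA) ∘ₗ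
      ExtendByZero.linearMap ℝ u ∘ₗ mulVecLin UB ∘ₗ ExtendByZero.linearMap ℝ ((↑) : T → κ)
  obtain ⟨a, ha, ha0⟩ := (Submodule.ne_bot_iff _).mp
    (LinearMap.ker_ne_bot_of_finrank_lt (f := φ) (by simpa using hlt))
  set w : κ → ℝ := extend (↑) a 0
  set y := UB *ᵥ w
  set x := extend u y 0
  set c := star UA *ᵥ x
  have hw0 : w ≠ 0 := fun hw =>
    ha0 (extend_injective Subtype.val_injective (0 : κ → ℝ) (hw.trans (extend_zero _).symm))
  have hwT : ∀ j, w j ≠ 0 → θ ≤ hB.eigenvalues j := fun j hj => by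
    by_contra hjT
    exact hj (extend_apply' _ _ _ fun ⟨k, hk⟩ => hjT (hk ▸ (Finset.mem_filter.mp k.2).2))
  have hcS : ∀ v, c v ≠ 0 → hA.eigenvalues v < θ := fun v hv => by
    by_contra! hvS
    exact hv (congrFun (LinearMap.mem_ker.mp ha) ⟨v, by simpa [S] using hvS⟩)
  have hxc : x = UA *ᵥ c := by
    rw [mulVec_mulVec, mem_unitaryGroup_iff.mp hA.eigenvectorUnitary.2, one_mulVec]
  have hxy : x ⬝ᵥ x = y ⬝ᵥ y := by rw [hu.extend_zero_dotProduct, extend_comp hu]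
  have hc0 : c ≠ 0 := fun hc => hw0 <| dotProduct_self_eq_zero.mp <| by
    rw [← unitaryGroup_mulVec_dotProduct_mulVec hB.eigenvectorUnitary.2, ← hxy, hxc, hc,
      mulVec_zero, dotProduct_zero]
  refine lt_irrefl (θ * (y ⬝ᵥ y)) ?_
  calc θ * (y ⬝ᵥ y) ≤ y ⬝ᵥ B *ᵥ y := hB.mul_dotProduct_self_le_of_le_eigenvalues hwT
    _ ≤ x ⬝ᵥ A *ᵥ x := hBA.dotProduct_mulVec_le_extend_zero hu y
    _ < θ * (x ⬝ᵥ x) := by rw [hxc]; exact hA.dotProduct_mulVec_lt_of_eigenvalues_lt hc0 hcS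
    _ = θ * (y ⬝ᵥ y) := by rw [hxy]

end Matrix.IsHermitian

theorem ithEig_le_ithEig_of_posSemidef_submatrix_sub {κ ι : Type*} [Fintype κ] [DecidableEq κ]
    [Fintype ι] [DecidableEq ι] {A : Matrix ι ι ℝ} {B : Matrix κ κ ℝ} (hA : A.IsHermitian)
    (hB : B.IsHermitian) {u : κ → ι} (hu : Function.Injective u)
    (hBA : (A.submatrix u u - B).PosSemidef) {i : ℕ} (hi : i < Fintype.card κ) :
    ithEig hB i ≤ ithEig hA i := by
  have hB_count := (le_ithEig_iff hB hi (ithEig hB i)).mp le_rfl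
  have hA_count :=
    hB_count.trans_le (hA.card_le_eigenvalues_le_of_posSemidef_submatrix_sub hB hu hBA _)
  exact (le_ithEig_iff hA (hA_count.trans_le (card_le_univ _)) _).mpr hA_count

theorem eigenvalue_lower_bound_induced_general {V : Type*} [Fintype V]
    (G : SimpleGraph V) (s : ℕ) (u : Fin s → V) (hu : Function.Injective u)
    (c : Fin s → ℝ) (hc : ∀ j, 0 ≤ c j ∧ c j ≤ (G.degree (u j) : ℝ))
    (hQ : (signlessLaplacian G).IsHermitian)
    (M : Matrix (Fin s) (Fin s) ℝ)
    (hMdef : M = Matrix.of fun j k =>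
      (if j = k then c j else 0) + (if G.Adj (u j) (u k) then 1 else 0))
    (hM : M.IsHermitian) :
    ∀ i, i < s → ithEig hM i ≤ ithEig hQ i := by
  intro i hi
  have hQM : (signlessLaplacian G).submatrix u u - M =
      diagonal fun j => (G.degree (u j) : ℝ) - c j := by
    ext j k
    by_cases hjk : j = k <;> simp [signlessLaplacian, hMdef, hjk, hu.ne]
  refine ithEig_le_ithEig_of_posSemidef_submatrix_sub hQ hM hu ?_ (by simpa using hi)
  rw [hQM]
  exact PosSemidef.diagonal fun j => sub_nonneg.mpr (hc j).2

theorem eigenvalue_lower_bound_induced {V : Type*} [Fintype V] [DecidableEq V]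
    (G : SimpleGraph V) (s : ℕ) (u : Fin s → V) (hu : Function.Injective u)
    (c : Fin s → ℝ) (hc : ∀ j, 0 ≤ c j ∧ c j ≤ (G.degree (u j) : ℝ))
    (hQ : (signlessLaplacian G).IsHermitian)
    (M : Matrix (Fin s) (Fin s) ℝ)
    (hMdef : M = Matrix.of fun j k =>
      (if j = k then c j else 0) + (if G.Adj (u j) (u k) then 1 else 0))
    (hM : M.IsHermitian) :
    ∀ i, i < s → ithEig hM i ≤ ithEig hQ i :=
  eigenvalue_lower_bound_induced_general G s u hu c hc hQ M hMdef hM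
end

section
/- Let G = K_1 ∨ (C_{l_1} ∪ ... ∪ C_{l_t} ∪ s K_1) with s, t ≥ 1 and n vertices. Then 5 is an eigenvalue of the signless Laplacian Q(G) with multiplicity at least t − 1. -/
open SimpleGraph Matrix Finset
attribute [local instance] Classical.propDecidable
set_option linter.unnecessarySimpa false

/-!
On the vertices of a cycle the signless Laplacian of `K_1 ∨ (C_{l_1} ∪ ⋯ ∪ C_{l_t} ∪ s K_1)` acts
like `Q(C_l) + I`, and a vector that is constant on every cycle is a `4`-eigenvector of
`Q(C_{l_1} ∪ ⋯ ∪ C_{l_t})`. Extending such a vector by zero to the apex and to the isolated vertices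
gives a `5`-eigenvector of the whole graph exactly when the apex row vanishes, i.e. when the
constants `c_i` satisfy `∑ l_i c_i = 0`; these vectors form a space of dimension at least `t - 1`.
-/

theorem signlessLaplacian_mulVec_apply {V : Type*} [Fintype V] (G : SimpleGraph V)
    (x : V → ℝ) (v : V) :
    (signlessLaplacian G *ᵥ x) v = ∑ u ∈ G.neighborFinset v, (x v + x u) := by
  rw [signlessLaplacian, add_mulVec, Pi.add_apply, mulVec_diagonal, adjMatrix_mulVec_apply,
    sum_add_distrib, sum_const, nsmul_eq_mul, card_neighborFinset_eq_degree]

section JoinAndUnion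

variable {α β : Type*} [Fintype α] [Fintype β] (G : SimpleGraph α) (H : SimpleGraph β)

theorem joinG_neighborFinset_inl (a : α) :
    (joinG G H).neighborFinset (.inl a) = (G.neighborFinset a).disjSum univ := by
  ext (b | b) <;> rw [mem_neighborFinset] <;> simp [joinG]

theorem joinG_neighborFinset_inr (b : β) :
    (joinG G H).neighborFinset (.inr b) = univ.disjSum (H.neighborFinset b) := by
  ext (a | a) <;> rw [mem_neighborFinset] <;> simp [joinG]

theorem sumG_neighborFinset_inl (a : α) :
    (sumG G H).neighborFinset (.inl a) = (G.neighborFinset a).disjSum ∅ := by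
  ext (b | b) <;> rw [mem_neighborFinset] <;> simp [sumG]

theorem sumG_neighborFinset_inr (b : β) :
    (sumG G H).neighborFinset (.inr b) = (∅ : Finset α).disjSum (H.neighborFinset b) := by
  ext (a | a) <;> rw [mem_neighborFinset] <;> simp [sumG]

theorem signlessLaplacian_sumG_mulVec_elim (y : α → ℝ) (z : β → ℝ) :
    signlessLaplacian (sumG G H) *ᵥ Sum.elim y z
      = Sum.elim (signlessLaplacian G *ᵥ y) (signlessLaplacian H *ᵥ z) := by
  ext (a | b) <;>
    simp [signlessLaplacian_mulVec_apply, sumG_neighborFinset_inl, sumG_neighborFinset_inr]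

theorem signlessLaplacian_joinG_mulVec_elim_zero (y : β → ℝ) :
    signlessLaplacian (joinG G H) *ᵥ Sum.elim 0 y
      = Sum.elim (fun _ => ∑ b, y b) (signlessLaplacian H *ᵥ y + (Fintype.card α : ℝ) • y) := by
  ext (a | b)
  · simp [signlessLaplacian_mulVec_apply, joinG_neighborFinset_inl]
  · simp only [signlessLaplacian_mulVec_apply, joinG_neighborFinset_inr, sum_disjSum,
      Sum.elim_inl, Sum.elim_inr, Pi.zero_apply, add_zero, sum_const, card_univ, nsmul_eq_mul,
      Pi.add_apply, Pi.smul_apply, smul_eq_mul]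
    ring

end JoinAndUnion

theorem cyclesUnion_neighborFinset {t : ℕ} (l : Fin t → ℕ) (i : Fin t) (a : Fin (l i)) :
    (cyclesUnion t l).neighborFinset ⟨i, a⟩
      = ((cycleGraph (l i)).neighborFinset a).map (Function.Embedding.sigmaMk i) := by
  ext ⟨j, b⟩
  rw [mem_neighborFinset]
  constructor
  · rintro ⟨hij, h⟩
    dsimp only at hij h
    subst hij
    simpa using h
  · simp only [mem_map, mem_neighborFinset, Function.Embedding.sigmaMk_apply]
    rintro ⟨b, h, hb⟩
    cases hb
    exact ⟨rfl, h⟩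

theorem card_cycleGraph_neighborFinset {n : ℕ} (hn : 3 ≤ n) (a : Fin n) :
    #((cycleGraph n).neighborFinset a) = 2 := by
  obtain ⟨m, rfl⟩ : ∃ m, n = m + 3 := ⟨n - 3, by omega⟩
  exact cycleGraph_degree_three_le

theorem signlessLaplacian_cyclesUnion_mulVec {t : ℕ} {l : Fin t → ℕ} (hl : ∀ i, 3 ≤ l i)
    (c : Fin t → ℝ) :
    signlessLaplacian (cyclesUnion t l) *ᵥ (fun σ => c σ.1) = (4 : ℝ) • fun σ => c σ.1 := by
  ext ⟨i, a⟩
  simp only [signlessLaplacian_mulVec_apply, cyclesUnion_neighborFinset, sum_map,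
    Function.Embedding.sigmaMk_apply, sum_const, card_cycleGraph_neighborFinset (hl i),
    nsmul_eq_mul, Pi.smul_apply, smul_eq_mul]
  ring

theorem signlessLaplacian_cone_mulVec_elim {β γ : Type*} [Fintype β] [Fintype γ]
    (H : SimpleGraph β) {y : β → ℝ} {μ : ℝ} (hy : signlessLaplacian H *ᵥ y = μ • y)
    (hsum : ∑ b, y b = 0) :
    signlessLaplacian (joinG (⊥ : SimpleGraph Unit) (sumG H (⊥ : SimpleGraph γ)))
        *ᵥ Sum.elim (0 : Unit → ℝ) (Sum.elim y (0 : γ → ℝ))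
      = (μ + 1) • Sum.elim (0 : Unit → ℝ) (Sum.elim y (0 : γ → ℝ)) := by
  ext (_ | b | _) <;>
    simp [signlessLaplacian_joinG_mulVec_elim_zero, signlessLaplacian_sumG_mulVec_elim, hy,
      hsum, add_mul]

theorem finrank_sub_one_le_of_map_ker_le {K V W : Type*} [Field K] [AddCommGroup V] [Module K V]
    [FiniteDimensional K V] [AddCommGroup W] [Module K W] [FiniteDimensional K W]
    {f : V →ₗ[K] W} (hf : Function.Injective f) (φ : Module.Dual K V) {E : Submodule K W}
    (hE : (LinearMap.ker φ).map f ≤ E) :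
    Module.finrank K V - 1 ≤ Module.finrank K E := by
  have h_range : Module.finrank K (LinearMap.range φ) ≤ 1 :=
    (Submodule.finrank_le _).trans (Module.finrank_self K).le
  calc Module.finrank K V - 1 ≤ Module.finrank K (LinearMap.ker φ) := by
        have := φ.finrank_range_add_finrank_ker
        omega
    _ = Module.finrank K ((LinearMap.ker φ).map f) :=
        LinearEquiv.finrank_eq (Submodule.equivMapOfInjective f hf _)
    _ ≤ Module.finrank K E := Submodule.finrank_mono hE

def cyclewiseConst (t s : ℕ) (l : Fin t → ℕ) :
    (Fin t → ℝ) →ₗ[ℝ] (Unit ⊕ ((Σ i : Fin t, Fin (l i)) ⊕ Fin s) → ℝ) where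
  toFun c := Sum.elim 0 (Sum.elim (fun σ => c σ.1) 0)
  map_add' c d := by ext (_ | _ | _) <;> simp
  map_smul' r c := by ext (_ | _ | _) <;> simp

theorem cyclewiseConst_injective {t s : ℕ} {l : Fin t → ℕ} (hl : ∀ i, 0 < l i) :
    Function.Injective (cyclewiseConst t s l) := by
  intro c d h
  ext i
  simpa [cyclewiseConst] using congrFun h (.inr (.inl ⟨i, ⟨0, hl i⟩⟩))

theorem mult_five_ge_general (t s : ℕ)
    (l : Fin t → ℕ) (hl : ∀ i, 3 ≤ l i) :
    t - 1 ≤ Module.finrank ℝ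
      ↥(Module.End.eigenspace (Matrix.toLin' (signlessLaplacian
        (joinG (⊥ : SimpleGraph Unit)
          (sumG (cyclesUnion t l) (⊥ : SimpleGraph (Fin s)))))) 5) := by
  have h_ker : (LinearMap.ker (Fintype.linearCombination ℝ fun i => (l i : ℝ))).map
      (cyclewiseConst t s l) ≤ Module.End.eigenspace (Matrix.toLin' (signlessLaplacian
        (joinG ⊥ (sumG (cyclesUnion t l) ⊥)))) 5 := by
    rintro _ ⟨c, hc, rfl⟩
    have hsum : ∑ σ : Σ i : Fin t, Fin (l i), c σ.1 = 0 := by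
      simpa [Fintype.linearCombination_apply, Fintype.sum_sigma, mul_comm] using hc
    rw [Module.End.mem_eigenspace_iff, toLin'_apply]
    have h_eigen := signlessLaplacian_cone_mulVec_elim (γ := Fin s) (cyclesUnion t l)
      (signlessLaplacian_cyclesUnion_mulVec hl c) hsum
    rw [show (4 : ℝ) + 1 = 5 by norm_num] at h_eigen
    exact h_eigen
  calc t - 1 = Module.finrank ℝ (Fin t → ℝ) - 1 := by rw [Module.finrank_fin_fun]
    _ ≤ _ := finrank_sub_one_le_of_map_ker_le
      (cyclewiseConst_injective fun i => by have := hl i; omega) _ h_ker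

theorem mult_five_ge (t s : ℕ) (ht : 1 ≤ t) (hs : 1 ≤ s)
    (l : Fin t → ℕ) (hl : ∀ i, 3 ≤ l i) :
    t - 1 ≤ Module.finrank ℝ
      ↥(Module.End.eigenspace (Matrix.toLin' (signlessLaplacian
        (joinG (⊥ : SimpleGraph Unit)
          (sumG (cyclesUnion t l) (⊥ : SimpleGraph (Fin s)))))) 5) :=
  mult_five_ge_general t s l hl
end

section
/- Let H = K_1 ∨ (K_{1,3} ∪ (s−1) K_1) with s ≥ 1 and order n = s + 4. Then the signless Laplacian spectrum of H is {1 with multiplicity s−1, 2 with multiplicity 2, r_1, r_2, r_3}, where r_1, r_2, r_3 are the roots of x^3 − (n+5)x^2 + 5nx − 4(n−s−1). -/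
open SimpleGraph Matrix Finset
attribute [local instance] Classical.propDecidable
set_option linter.unnecessarySimpa false

/-!
Order the vertices as the dominating vertex, the centre of the star, the three leaves and the
`s - 1` isolated vertices. The leaves and the isolated vertices form an independent set, so on
them `xI - Q` is diagonal, with entries `x - 2` and `x - 1`. The Schur complement of that
diagonal block is a `2 × 2` matrix, and for `x ∉ {1, 2}` this gives
`det (xI - Q) = (x - 1)^(s - 1) (x - 2)^2 p(x)`, with `p` the cubic of the statement. Two
polynomials that agree on infinitely many points are equal, so this determines the
characteristic polynomial of `Q`, and its roots are the eigenvalues.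
-/

open Polynomial in
theorem eigMultiset_eq_of_det_eq {V : Type*} [Fintype V] [DecidableEq V] {M : Matrix V V ℝ}
    (hM : M.IsHermitian) (m : Multiset ℝ) {S : Set ℝ} (hS : S.Finite)
    (hdet : ∀ x ∉ S, (scalar V x - M).det = (m.map (x - ·)).prod) :
    eigMultiset hM = m := by
  have hcharpoly : M.charpoly = (m.map (X - C ·)).prod := by
    refine eq_of_infinite_eval_eq _ _ (hS.infinite_compl.mono fun x hx => ?_)
    rw [Set.mem_ofPred_eq, eval_charpoly, hdet x hx, eval_multiset_prod, Multiset.map_map]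
    simp
  have hroots : M.charpoly.roots = eigMultiset hM := by
    simp [hM.roots_charpoly_eq_eigenvalues, eigMultiset]
  rw [← hroots, hcharpoly, roots_multiset_prod_X_sub_C]

theorem det_fromBlocks_diagonal {R m n : Type*} [Field R] [Fintype m] [Fintype n]
    [DecidableEq m] [DecidableEq n] (A : Matrix m m R) (B : Matrix m n R) (C : Matrix n m R)
    {d : n → R} (hd : ∀ i, d i ≠ 0) :
    (fromBlocks A B C (diagonal d)).det = (∏ i, d i) * (A - B * diagonal d⁻¹ * C).det := by
  let _ : Invertible (diagonal d) :=
    ⟨diagonal d⁻¹, by simp [diagonal_mul_diagonal, hd], by simp [diagonal_mul_diagonal, hd]⟩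
  rw [det_fromBlocks₂₂, det_diagonal]
  rfl

theorem scalar_sub_signlessLaplacian_apply {V : Type*} [Fintype V] [DecidableEq V]
    (G : SimpleGraph V) (x : ℝ) (i j : V) :
    (scalar V x - signlessLaplacian G) i j =
      if i = j then x - G.degree i else if G.Adj i j then -1 else 0 := by
  by_cases hij : i = j
  · subst hij; simp [signlessLaplacian]
  · simp [signlessLaplacian, hij, adjMatrix_apply, apply_ite]

section
variable {α β : Type*} (G : SimpleGraph α) (H : SimpleGraph β)

@[simp] theorem joinG_adj_inl_inl {a a' : α} : (joinG G H).Adj (.inl a) (.inl a') ↔ G.Adj a a' :=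
  Iff.rfl
@[simp] theorem joinG_adj_inr_inr {b b' : β} : (joinG G H).Adj (.inr b) (.inr b') ↔ H.Adj b b' :=
  Iff.rfl
@[simp] theorem joinG_adj_inl_inr {a : α} {b : β} : (joinG G H).Adj (.inl a) (.inr b) :=
  trivial
@[simp] theorem joinG_adj_inr_inl {a : α} {b : β} : (joinG G H).Adj (.inr b) (.inl a) :=
  trivial
@[simp] theorem sumG_adj_inl_inl {a a' : α} : (sumG G H).Adj (.inl a) (.inl a') ↔ G.Adj a a' :=
  Iff.rfl
@[simp] theorem sumG_adj_inr_inr {b b' : β} : (sumG G H).Adj (.inr b) (.inr b') ↔ H.Adj b b' :=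
  Iff.rfl
@[simp] theorem sumG_not_adj_inl_inr {a : α} {b : β} : ¬(sumG G H).Adj (.inl a) (.inr b) :=
  id
@[simp] theorem sumG_not_adj_inr_inl {a : α} {b : β} : ¬(sumG G H).Adj (.inr b) (.inl a) :=
  id

variable [Fintype α] [Fintype β]

@[simp] theorem joinG_degree_inl (a : α) :
    (joinG G H).degree (.inl a) = G.degree a + Fintype.card β := by
  rw [← card_neighborFinset_eq_degree, ← card_neighborFinset_eq_degree, ← card_univ,
    ← card_disjSum]
  congr 1
  ext (w | w) <;> simp

@[simp] theorem joinG_degree_inr (b : β) :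
    (joinG G H).degree (.inr b) = Fintype.card α + H.degree b := by
  rw [← card_neighborFinset_eq_degree, ← card_neighborFinset_eq_degree, ← card_univ,
    ← card_disjSum]
  congr 1
  ext (w | w) <;> simp

@[simp] theorem sumG_degree_inl (a : α) : (sumG G H).degree (.inl a) = G.degree a := by
  simp_rw [← card_neighborFinset_eq_degree]
  rw [eq_comm, ← card_map Function.Embedding.inl]
  congr 1
  ext (w | w) <;> simp

@[simp] theorem sumG_degree_inr (b : β) : (sumG G H).degree (.inr b) = H.degree b := by
  simp_rw [← card_neighborFinset_eq_degree]
  rw [eq_comm, ← card_map Function.Embedding.inr]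
  congr 1
  ext (w | w) <;> simp

@[simp] theorem completeBipartiteGraph_degree_inl (a : α) :
    (completeBipartiteGraph α β).degree (.inl a) = Fintype.card β := by
  rw [← card_neighborFinset_eq_degree, ← card_univ, eq_comm,
    ← card_map Function.Embedding.inr]
  congr 1
  ext (w | w) <;> simp

@[simp] theorem completeBipartiteGraph_degree_inr (b : β) :
    (completeBipartiteGraph α β).degree (.inr b) = Fintype.card α := by
  rw [← card_neighborFinset_eq_degree, ← card_univ, eq_comm,
    ← card_map Function.Embedding.inl]
  congr 1
  ext (w | w) <;> simp

end

abbrev joinStar (t : ℕ) : SimpleGraph (Unit ⊕ ((Unit ⊕ Fin 3) ⊕ Fin t)) :=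
  joinG ⊥ (sumG (completeBipartiteGraph Unit (Fin 3)) ⊥)

def joinStarEquiv (t : ℕ) :
    Unit ⊕ ((Unit ⊕ Fin 3) ⊕ Fin t) ≃ Fin 2 ⊕ (Fin 3 ⊕ Fin t) where
  toFun
    | .inl () => .inl 0
    | .inr (.inl (.inl ())) => .inl 1
    | .inr (.inl (.inr i)) => .inr (.inl i)
    | .inr (.inr j) => .inr (.inr j)
  invFun
    | .inl i => if i = 0 then .inl () else .inr (.inl (.inl ()))
    | .inr (.inl i) => .inr (.inl (.inr i))
    | .inr (.inr j) => .inr (.inr j)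
  left_inv := by rintro (_ | (_ | _) | _) <;> rfl
  right_inv := by rintro (i | i | j) <;> [fin_cases i <;> rfl; rfl; rfl]

def joinStarHubBlock (t : ℕ) : Matrix (Fin 2) (Fin 3 ⊕ Fin t) ℝ :=
  Matrix.of ![-1, Sum.elim (-1) 0]

theorem scalar_sub_signlessLaplacian_joinStar (t : ℕ) (x : ℝ) :
    scalar _ x - signlessLaplacian (joinStar t) =
      (fromBlocks !![x - (t + 4), -1; -1, x - 4] (joinStarHubBlock t) (joinStarHubBlock t)ᵀ
        (diagonal (Sum.elim (fun _ => x - 2) fun _ => x - 1))).submatrix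
        (joinStarEquiv t) (joinStarEquiv t) := by
  ext i j
  rw [scalar_sub_signlessLaplacian_apply]
  rcases i with _ | (_ | i) | i <;> rcases j with _ | (_ | j) | j <;>
    simp [joinStarEquiv, joinStarHubBlock, diagonal_apply, add_comm]

theorem det_scalar_sub_signlessLaplacian_joinStar (t : ℕ) {x : ℝ} (hx1 : x ≠ 1)
    (hx2 : x ≠ 2) :
    (scalar _ x - signlessLaplacian (joinStar t)).det =
      (x - 1) ^ t * (x - 2) ^ 2 * (x ^ 3 - (t + 10) * x ^ 2 + (5 * t + 25) * x - 12) := by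
  have hx1' : x - 1 ≠ 0 := sub_ne_zero.mpr hx1
  have hx2' : x - 2 ≠ 0 := sub_ne_zero.mpr hx2
  have hschur : !![x - (t + 4), -1; -1, x - 4] -
      joinStarHubBlock t *
        diagonal (Sum.elim (fun _ : Fin 3 => x - 2) fun _ : Fin t => x - 1)⁻¹ *
        (joinStarHubBlock t)ᵀ =
      !![x - (t + 4) - 3 / (x - 2) - t / (x - 1), -1 - 3 / (x - 2);
        -1 - 3 / (x - 2), x - 4 - 3 / (x - 2)] := by
    ext i j
    simp only [Matrix.sub_apply, mul_apply, transpose_apply, Fintype.sum_sum_type]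
    fin_cases i <;> fin_cases j <;> simp [joinStarHubBlock, diagonal_apply, div_eq_inv_mul] <;> ring
  rw [scalar_sub_signlessLaplacian_joinStar, det_submatrix_equiv_self,
    det_fromBlocks_diagonal _ _ _ (by rintro (i | i) <;> simp [hx1', hx2']), hschur,
    Fintype.prod_sum_type, det_fin_two_of]
  simp only [Sum.elim_inl, Sum.elim_inr, prod_const, card_univ, Fintype.card_fin]
  field_simp
  ring

theorem spectrum_of_join_star (s n : ℕ) (hs : 1 ≤ s) (hn : n = s + 4)
    (r1 r2 r3 : ℝ)
    (hroots : ∀ x : ℝ, x ^ 3 - (n + 5) * x ^ 2 + 5 * n * x - 4 * ((n : ℝ) - s - 1) =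
      (x - r1) * (x - r2) * (x - r3))
    (hQ : (signlessLaplacian (joinG (⊥ : SimpleGraph Unit)
      (sumG (completeBipartiteGraph Unit (Fin 3))
        (⊥ : SimpleGraph (Fin (s - 1)))))).IsHermitian) :
    eigMultiset hQ =
      Multiset.replicate (s - 1) 1 + {2, 2} + {r1, r2, r3} := by
  refine eigMultiset_eq_of_det_eq hQ _ (Set.toFinite {1, 2}) fun x hx => ?_
  obtain ⟨hx1, hx2⟩ : x ≠ 1 ∧ x ≠ 2 := by simpa [not_or] using hx
  have hcubic := hroots x
  rw [hn, Nat.cast_add] at hcubic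
  rw [det_scalar_sub_signlessLaplacian_joinStar (s - 1) hx1 hx2, Nat.cast_sub hs]
  simp only [Multiset.map_add, Multiset.map_replicate, Multiset.prod_add, Multiset.prod_replicate,
    Multiset.insert_eq_cons, Multiset.map_cons, Multiset.prod_cons, Multiset.map_singleton,
    Multiset.prod_singleton]
  linear_combination (x - 1) ^ (s - 1) * (x - 2) ^ 2 * hcubic
end

section
/- Let G be a graph of order n whose signless Laplacian spectrum consists (with multiplicity) of eigenvalues all lying in (0, 5] except for one eigenvalue exceeding n; that is, 0 < κ_n ≤ κ_2 ≤ 5 < n < κ_1. If n ≥ 12, then G is connected, its second largest degree d_2 is at most 4, and its maximum degree d_1 is at least n − 3. -/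
open SimpleGraph Matrix Finset
attribute [local instance] Classical.propDecidable
set_option linter.unnecessarySimpa false

/-!
Over ℝ the signless Laplacian factors as `Q = N Nᵀ` with `N` the vertex–edge incidence matrix, so
`zᵀ Q z = ∑_{uv ∈ E} (z u + z v)²`. Cauchy–Schwarz on each edge, with weights `d u` and `d v`,
gives `κ₁ ≤ max_{uv ∈ E} (d u + d v) ≤ d₁ + d₂`, hence `d₁ + d₂ > n ≥ 12`. If `d₂ ≥ 5`, the
stars of the two vertices of largest degree span a plane on which the Rayleigh quotient exceeds
`5`, so `κ₂ > 5` by Courant–Fischer; thus `d₂ ≤ 4` and `d₁ ≥ n - 3`. If `G` were disconnected, a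
component avoiding the closed neighbourhood of the top vertex would have at most two vertices,
hence be `K₁` or `K₂`, and would carry a vector `z ≠ 0` with `zᵀ Q z = 0`, contradicting `κₙ > 0`.
-/

namespace Matrix.IsHermitian

variable {V : Type*} [Fintype V] [DecidableEq V] {M : Matrix V V ℝ} (hM : M.IsHermitian)

lemma sort_eigMultiset : (eigMultiset hM).sort (· ≥ ·) = List.ofFn hM.eigenvalues₀ := by
  have h := hM.sort_roots_charpoly_eq_eigenvalues₀
  rw [hM.roots_charpoly_eq_eigenvalues, Multiset.map_map] at h
  simpa [eigMultiset] using h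

lemma ithEig_eq_eigenvalues₀ (i : Fin (Fintype.card V)) : ithEig hM i = hM.eigenvalues₀ i := by
  simp [ithEig, sort_eigMultiset]

lemma eigenvalues_eq_eigenvalues₀ (v : V) :
    hM.eigenvalues v = hM.eigenvalues₀ ((Fintype.equivOfCardEq (Fintype.card_fin _)).symm v) :=
  rfl

lemma ithEig_pred_card_le_eigenvalues (v : V) :
    ithEig hM (Fintype.card V - 1) ≤ hM.eigenvalues v := by
  have hcard : 0 < Fintype.card V := Fintype.card_pos_iff.2 ⟨v⟩
  exact (ithEig_eq_eigenvalues₀ hM ⟨_, Nat.sub_one_lt hcard.ne'⟩).trans_le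
    (hM.eigenvalues₀_antitone (Fin.mk_le_mk.2 (Nat.le_sub_one_of_lt (Fin.is_lt _))))

lemma exists_eigenvalues_eq_ithEig_zero [Nonempty V] : ∃ v, hM.eigenvalues v = ithEig hM 0 :=
  ⟨Fintype.equivOfCardEq (Fintype.card_fin _) ⟨0, Fintype.card_pos⟩, by
    rw [eigenvalues_eq_eigenvalues₀, Equiv.symm_apply_apply, ← ithEig_eq_eigenvalues₀]⟩

lemma eq_of_lt_eigenvalues {c : ℝ} (h : ithEig hM 1 ≤ c) {v v' : V} (hv : c < hM.eigenvalues v)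
    (hv' : c < hM.eigenvalues v') : v = v' := by
  let e : V ≃ Fin (Fintype.card V) := (Fintype.equivOfCardEq (Fintype.card_fin _)).symm
  have top : ∀ u, c < hM.eigenvalues u → (e u : ℕ) = 0 := by
    intro u hu
    by_contra hne
    have h1 : 1 < Fintype.card V := by have := (e u).is_lt; omega
    have := hM.eigenvalues₀_antitone
      (show (⟨1, h1⟩ : Fin _) ≤ e u from Fin.mk_le_mk.2 (Nat.one_le_iff_ne_zero.2 hne))
    rw [← ithEig_eq_eigenvalues₀ hM ⟨1, h1⟩] at this
    exact (hu.trans_le this).not_ge h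
  exact e.injective (Fin.ext ((top v hv).trans (top v' hv').symm))

noncomputable def eigenCoords (x : V → ℝ) : V → ℝ :=
  star (hM.eigenvectorUnitary : Matrix V V ℝ) *ᵥ x

lemma eigenCoords_add_smul (α β : ℝ) (x y : V → ℝ) :
    hM.eigenCoords (α • x + β • y) = α • hM.eigenCoords x + β • hM.eigenCoords y := by
  simp only [eigenCoords, mulVec_add, mulVec_smul]

lemma dotProduct_eigenvectorUnitary_mulVec (x y : V → ℝ) :
    x ⬝ᵥ (hM.eigenvectorUnitary : Matrix V V ℝ) *ᵥ y = hM.eigenCoords x ⬝ᵥ y := by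
  rw [eigenCoords, dotProduct_mulVec, ← mulVec_transpose, star_eq_conjTranspose,
    conjTranspose_eq_transpose_of_trivial]

lemma dotProduct_self_eq_sum_eigenCoords_sq (x : V → ℝ) :
    x ⬝ᵥ x = ∑ v, hM.eigenCoords x v ^ 2 := by
  have hU : (hM.eigenvectorUnitary : Matrix V V ℝ) *ᵥ hM.eigenCoords x = x := by
    rw [eigenCoords, mulVec_mulVec, Unitary.mul_star_self_of_mem hM.eigenvectorUnitary.2,
      one_mulVec]
  conv_lhs => rw [← hU]
  rw [dotProduct_eigenvectorUnitary_mulVec, hU]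
  simp [dotProduct, sq]

lemma dotProduct_mulVec_eq_sum_eigenvalues (x : V → ℝ) :
    x ⬝ᵥ M *ᵥ x = ∑ v, hM.eigenvalues v * hM.eigenCoords x v ^ 2 := by
  have hM' : M = (hM.eigenvectorUnitary : Matrix V V ℝ) * diagonal hM.eigenvalues *
      star (hM.eigenvectorUnitary : Matrix V V ℝ) := by
    simpa [Unitary.conjStarAlgAut_apply] using hM.spectral_theorem
  conv_lhs => rw [hM', ← mulVec_mulVec, ← mulVec_mulVec, dotProduct_eigenvectorUnitary_mulVec]
  simp [eigenCoords, dotProduct, mulVec_diagonal, sq, mul_left_comm]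

lemma ithEig_pred_card_mul_le (x : V → ℝ) :
    ithEig hM (Fintype.card V - 1) * (x ⬝ᵥ x) ≤ x ⬝ᵥ M *ᵥ x := by
  rw [hM.dotProduct_self_eq_sum_eigenCoords_sq, hM.dotProduct_mulVec_eq_sum_eigenvalues, mul_sum]
  exact sum_le_sum fun v _ => by gcongr; exact hM.ithEig_pred_card_le_eigenvalues v

lemma dotProduct_mulVec_le_of_eigenCoords_eq_zero {c : ℝ} {x : V → ℝ}
    (hx : ∀ v, c < hM.eigenvalues v → hM.eigenCoords x v = 0) :
    x ⬝ᵥ M *ᵥ x ≤ c * (x ⬝ᵥ x) := by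
  rw [hM.dotProduct_self_eq_sum_eigenCoords_sq, hM.dotProduct_mulVec_eq_sum_eigenvalues, mul_sum]
  refine sum_le_sum fun v _ => ?_
  rcases le_or_gt (hM.eigenvalues v) c with hv | hv
  · gcongr
  · simp [hx v hv]

lemma dotProduct_mulVec_pos (hpos : 0 < ithEig hM (Fintype.card V - 1)) {x : V → ℝ}
    (hx : x ≠ 0) : 0 < x ⬝ᵥ M *ᵥ x := by
  have : 0 < x ⬝ᵥ x := by simpa using dotProduct_self_star_pos_iff.2 hx
  exact (mul_pos hpos this).trans_le (hM.ithEig_pred_card_mul_le x)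

lemma ithEig_zero_le_of_forall [Nonempty V] {C : ℝ}
    (hC : ∀ x : V → ℝ, x ⬝ᵥ M *ᵥ x ≤ C * (x ⬝ᵥ x)) : ithEig hM 0 ≤ C := by
  obtain ⟨v, hv⟩ := hM.exists_eigenvalues_eq_ithEig_zero
  set x := (hM.eigenvectorUnitary : Matrix V V ℝ) *ᵥ Pi.single v 1
  have hx : hM.eigenCoords x = Pi.single v 1 := by
    rw [eigenCoords, mulVec_mulVec, Unitary.star_mul_self_of_mem hM.eigenvectorUnitary.2,
      one_mulVec]
  have := hC x
  rw [hM.dotProduct_self_eq_sum_eigenCoords_sq, hM.dotProduct_mulVec_eq_sum_eigenvalues, hx] at this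
  simpa [Pi.single_apply, hv] using this

lemma lt_ithEig_one_of_forall {c : ℝ} (x y : V → ℝ)
    (h : ∀ α β : ℝ, (α ≠ 0 ∨ β ≠ 0) →
      c * ((α • x + β • y) ⬝ᵥ (α • x + β • y)) < (α • x + β • y) ⬝ᵥ M *ᵥ (α • x + β • y)) :
    c < ithEig hM 1 := by
  by_contra! hle
  -- only one eigenvalue exceeds `c`; choose the combination orthogonal to its eigenvector
  obtain ⟨α, β, hαβ, hz⟩ : ∃ α β : ℝ, (α ≠ 0 ∨ β ≠ 0) ∧
      ∀ v, c < hM.eigenvalues v → hM.eigenCoords (α • x + β • y) v = 0 := by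
    by_cases htop : ∃ v₀, c < hM.eigenvalues v₀ ∧ hM.eigenCoords x v₀ ≠ 0
    · obtain ⟨v₀, hv₀, hx⟩ := htop
      refine ⟨hM.eigenCoords y v₀, -hM.eigenCoords x v₀, Or.inr (neg_ne_zero.2 hx), ?_⟩
      intro v hv
      rw [hM.eq_of_lt_eigenvalues hle hv hv₀, eigenCoords_add_smul]
      simp only [Pi.add_apply, Pi.smul_apply, smul_eq_mul]
      ring
    · push Not at htop
      exact ⟨1, 0, Or.inl one_ne_zero, fun v hv => by simpa using htop v hv⟩
  exact (h α β hαβ).not_ge (hM.dotProduct_mulVec_le_of_eigenCoords_eq_zero hz)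

end Matrix.IsHermitian

lemma add_sq_le_mul_sq_div_add_sq_div {a b p q : ℝ} (hp : 0 < p) (hq : 0 < q) :
    (a + b) ^ 2 ≤ (p + q) * (a ^ 2 / p + b ^ 2 / q) := by
  rw [div_add_div _ _ hp.ne' hq.ne', mul_div_assoc', le_div_iff₀ (mul_pos hp hq)]
  nlinarith [sq_nonneg (a * q - b * p)]

lemma quadratic_form_pos {p q r α β : ℝ} (hp : 0 < p) (hdet : q ^ 2 < p * r)
    (hαβ : α ≠ 0 ∨ β ≠ 0) : 0 < p * α ^ 2 + 2 * q * α * β + r * β ^ 2 := by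
  rcases eq_or_ne β 0 with rfl | hβ
  · have hα : α ≠ 0 := by simpa using hαβ
    rw [zero_pow two_ne_zero, mul_zero, mul_zero, add_zero, add_zero]
    positivity
  · have hβ2 : 0 < β ^ 2 := by positivity
    have key : p * (p * α ^ 2 + 2 * q * α * β + r * β ^ 2)
        = (p * α + q * β) ^ 2 + (p * r - q ^ 2) * β ^ 2 := by ring
    refine pos_of_mul_pos_right ?_ hp.le
    nlinarith [sq_nonneg (p * α + q * β), mul_pos (sub_pos.2 hdet) hβ2]

/-- Here `a = #(N(t) \ {w})`, `b = #(N(w) \ {t})`, `s` is the number of common neighbours and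
`e = [t ~ w]`; the right side is the two-star part of `zᵀ Q z` for `z = twoStarVector t w α β`. -/
lemma five_mul_lt_two_stars {a b s e α β : ℝ} (he : e = 0 ∨ e = 1) (ha : 6 ≤ a + e)
    (hb : 5 ≤ b + e) (hab : 13 ≤ a + b + 2 * e) (hs : 0 ≤ s) (hsa : s ≤ a) (hsb : s ≤ b)
    (hαβ : α ≠ 0 ∨ β ≠ 0) :
    5 * (α ^ 2 + 64 * β ^ 2 + b * β ^ 2)
      < e * (α + 8 * β) ^ 2 + b * (9 * β) ^ 2 + (a * α ^ 2 + s * ((α + β) ^ 2 - α ^ 2)) := by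
  have hdet : (8 * e + s) ^ 2 < (a + e - 5) * (76 * b + 64 * e + s - 320) := by
    rcases he with rfl | rfl <;>
    nlinarith [mul_nonneg hs hs, mul_nonneg (sub_nonneg.2 hsa) (sub_nonneg.2 hsb),
      mul_nonneg (sub_nonneg.2 ha) (sub_nonneg.2 hb), mul_nonneg (sub_nonneg.2 ha) hs,
      mul_nonneg (sub_nonneg.2 hab) hs, mul_nonneg (sub_nonneg.2 hsa) hs,
      mul_nonneg (sub_nonneg.2 hsb) hs]
  have := quadratic_form_pos (by linarith) hdet hαβ
  linarith

namespace SimpleGraph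

variable {V : Type*} [Fintype V] [DecidableEq V] (G : SimpleGraph V)

lemma signlessLaplacian_eq_incMatrix_mul_transpose :
    signlessLaplacian G = G.incMatrix ℝ * (G.incMatrix ℝ)ᵀ := by
  rw [incMatrix_mul_transpose]
  ext u v
  by_cases huv : u = v
  · subst huv; simp [signlessLaplacian]
  · simp [signlessLaplacian, huv, adjMatrix_apply]

lemma incMatrix_transpose_mulVec_mk (z : V → ℝ) (u v : V) :
    ((G.incMatrix ℝ)ᵀ *ᵥ z) s(u, v) = if G.Adj u v then z u + z v else 0 := by
  simp only [mulVec, dotProduct, transpose_apply, incMatrix_apply', mk'_mem_incidenceSet_iff,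
    ite_mul, one_mul, zero_mul]
  split_ifs with huv
  · simp only [huv, true_and, ← sum_filter, filter_or, filter_eq', mem_univ, if_true]
    rw [sum_union (by simpa using huv.ne), sum_singleton, sum_singleton]
  · simp [huv]

lemma dotProduct_signlessLaplacian_mulVec (z : V → ℝ) :
    z ⬝ᵥ signlessLaplacian G *ᵥ z = ∑ e, ((G.incMatrix ℝ)ᵀ *ᵥ z) e ^ 2 := by
  rw [signlessLaplacian_eq_incMatrix_mul_transpose, ← mulVec_mulVec, dotProduct_mulVec,
    ← mulVec_transpose]
  simp [dotProduct, sq]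

lemma dotProduct_signlessLaplacian_mulVec_le {C : ℝ} (hC0 : 0 ≤ C)
    (hC : ∀ u v, G.Adj u v → (G.degree u : ℝ) + G.degree v ≤ C) (z : V → ℝ) :
    z ⬝ᵥ signlessLaplacian G *ᵥ z ≤ C * (z ⬝ᵥ z) := by
  set N := G.incMatrix ℝ
  set φ : V → ℝ := fun x => z x ^ 2 / G.degree x
  have hedge : ∀ e, ((Nᵀ *ᵥ z) e) ^ 2 ≤ C * (Nᵀ *ᵥ φ) e := by
    intro e
    induction e using Sym2.ind with
    | _ u v =>
      rw [incMatrix_transpose_mulVec_mk, incMatrix_transpose_mulVec_mk]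
      split_ifs with huv
      · have hu : (0 : ℝ) < G.degree u := by exact_mod_cast huv.degree_pos_left
        have hv : (0 : ℝ) < G.degree v := by exact_mod_cast huv.degree_pos_right
        calc (z u + z v) ^ 2 ≤ (G.degree u + G.degree v) * (φ u + φ v) :=
              add_sq_le_mul_sq_div_add_sq_div hu hv
          _ ≤ C * (φ u + φ v) := by gcongr; exact hC u v huv
      · simp
  have hsum : ∑ e, (Nᵀ *ᵥ φ) e = ∑ x, G.degree x * φ x := by
    simp only [mulVec, dotProduct, transpose_apply]
    rw [sum_comm]
    simp [N, ← sum_mul, sum_incMatrix_apply]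
  calc z ⬝ᵥ signlessLaplacian G *ᵥ z = ∑ e, ((Nᵀ *ᵥ z) e) ^ 2 :=
        G.dotProduct_signlessLaplacian_mulVec z
    _ ≤ C * ∑ x, G.degree x * φ x := by rw [← hsum, mul_sum]; exact sum_le_sum fun e _ => hedge e
    _ ≤ C * (z ⬝ᵥ z) := by
      refine mul_le_mul_of_nonneg_left (sum_le_sum fun x _ => ?_) hC0
      rcases eq_or_ne (G.degree x : ℝ) 0 with hx | hx
      · simp [hx, mul_self_nonneg]
      · simp [φ, mul_div_cancel₀ _ hx, sq]

lemma ithEig_zero_signlessLaplacian_le [Nonempty V] (hQ : (signlessLaplacian G).IsHermitian)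
    {C : ℝ} (hC0 : 0 ≤ C) (hC : ∀ u v, G.Adj u v → (G.degree u : ℝ) + G.degree v ≤ C) :
    ithEig hQ 0 ≤ C :=
  hQ.ithEig_zero_le_of_forall (G.dotProduct_signlessLaplacian_mulVec_le hC0 hC)

lemma sum_sq_neighbor_eq_sum_image {u : V} {s : Finset V} (hs : s ⊆ G.neighborFinset u)
    (z : V → ℝ) :
    ∑ v ∈ s, (z u + z v) ^ 2 = ∑ e ∈ s.image (s(u, ·)), ((G.incMatrix ℝ)ᵀ *ᵥ z) e ^ 2 := by
  rw [sum_image fun _ _ _ _ h => Sym2.congr_right.1 h]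
  refine sum_congr rfl fun v hv => ?_
  rw [incMatrix_transpose_mulVec_mk, if_pos ((G.mem_neighborFinset u v).1 (hs hv))]

lemma sum_sq_add_sum_sq_le_dotProduct_signlessLaplacian_mulVec {t w : V} (htw : t ≠ w)
    (z : V → ℝ) :
    ∑ v ∈ G.neighborFinset w, (z w + z v) ^ 2 + ∑ v ∈ (G.neighborFinset t).erase w, (z t + z v) ^ 2
      ≤ z ⬝ᵥ signlessLaplacian G *ᵥ z := by
  have hdisj : Disjoint ((G.neighborFinset w).image (s(w, ·)))
      (((G.neighborFinset t).erase w).image (s(t, ·))) := by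
    simp only [Finset.disjoint_left, mem_image, mem_erase, not_exists, not_and]
    rintro _ ⟨v, -, rfl⟩ v' ⟨hv', -⟩ h
    rcases Sym2.eq_iff.1 h with ⟨h1, -⟩ | ⟨-, h2⟩
    · exact htw h1
    · exact hv' h2
  rw [G.sum_sq_neighbor_eq_sum_image subset_rfl, G.sum_sq_neighbor_eq_sum_image (erase_subset _ _),
    ← sum_union hdisj, dotProduct_signlessLaplacian_mulVec]
  exact sum_le_univ_sum_of_nonneg fun _ => sq_nonneg _

lemma card_erase_neighborFinset_add_ite (u x : V) :
    #((G.neighborFinset u).erase x) + (if G.Adj u x then 1 else 0) = G.degree u := by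
  rw [← card_neighborFinset_eq_degree]
  split_ifs with h
  · exact card_erase_add_one ((G.mem_neighborFinset u x).2 h)
  · rw [erase_eq_of_notMem (by simpa using h), add_zero]

section TwoStars

/-- The test plane for `κ₂` is spanned by `Pi.single t 1` and this vector with `α = 0`, `β = 1`:
a Perron-type vector of the star at `w` (the weight `8` makes the estimates below work whether or
not `t` and `w` are adjacent). -/
noncomputable def twoStarVector (t w : V) (α β : ℝ) : V → ℝ := fun v =>
  if v = t then α else if v = w then 8 * β else if v ∈ (G.neighborFinset w).erase t then β else 0

variable {t w : V} (α β : ℝ)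

lemma twoStarVector_eq_add :
    G.twoStarVector t w α β = α • Pi.single t 1 + β • G.twoStarVector t w 0 1 := by
  ext v
  by_cases hvt : v = t
  · subst hvt; simp [twoStarVector]
  · simp [twoStarVector, hvt, mul_comm]

lemma dotProduct_self_twoStarVector (htw : t ≠ w) :
    G.twoStarVector t w α β ⬝ᵥ G.twoStarVector t w α β
      = α ^ 2 + 64 * β ^ 2 + #((G.neighborFinset w).erase t) * β ^ 2 := by
  have : ∀ v, G.twoStarVector t w α β v * G.twoStarVector t w α β v
      = (if v = t then α ^ 2 else 0) + (if v = w then 64 * β ^ 2 else 0)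
        + if v ∈ (G.neighborFinset w).erase t then β ^ 2 else 0 := by
    intro v
    by_cases hvt : v = t
    · subst hvt; simp [twoStarVector, htw, sq]
    · by_cases hvw : v = w
      · subst hvw; simp [twoStarVector, hvt]; ring
      · simp [twoStarVector, hvt, hvw]; split_ifs <;> ring
  simp only [dotProduct, this, sum_add_distrib, sum_ite_eq', mem_univ, if_true, sum_ite_mem,
    univ_inter, sum_const, nsmul_eq_mul]

lemma sum_neighborFinset_twoStarVector (htw : t ≠ w) :
    ∑ v ∈ G.neighborFinset w, (G.twoStarVector t w α β w + G.twoStarVector t w α β v) ^ 2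
      = (if G.Adj t w then (α + 8 * β) ^ 2 else 0)
        + #((G.neighborFinset w).erase t) * (9 * β) ^ 2 := by
  have : ∀ v ∈ G.neighborFinset w, (G.twoStarVector t w α β w + G.twoStarVector t w α β v) ^ 2
      = (if v = t then (α + 8 * β) ^ 2 else 0)
        + if v ∈ (G.neighborFinset w).erase t then (9 * β) ^ 2 else 0 := by
    intro v hv
    have hvw : v ≠ w := ((G.mem_neighborFinset w v).1 hv).ne'
    by_cases hvt : v = t
    · subst hvt; simp [twoStarVector, htw.symm]; ring
    · simp [twoStarVector, hvt, hvw, htw.symm, hv]; ring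
  rw [sum_congr rfl this, sum_add_distrib, sum_ite_eq', sum_ite_mem,
    inter_eq_right.2 (erase_subset _ _), sum_const, nsmul_eq_mul]
  simp only [mem_neighborFinset, G.adj_comm w t]

lemma sum_erase_neighborFinset_twoStarVector :
    ∑ v ∈ (G.neighborFinset t).erase w,
        (G.twoStarVector t w α β t + G.twoStarVector t w α β v) ^ 2
      = #((G.neighborFinset t).erase w) * α ^ 2
        + #((G.neighborFinset t).erase w ∩ (G.neighborFinset w).erase t)
          * ((α + β) ^ 2 - α ^ 2) := by
  have : ∀ v ∈ (G.neighborFinset t).erase w,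
      (G.twoStarVector t w α β t + G.twoStarVector t w α β v) ^ 2
        = α ^ 2 + if v ∈ (G.neighborFinset w).erase t then (α + β) ^ 2 - α ^ 2 else 0 := by
    intro v hv
    have hvw : v ≠ w := ne_of_mem_erase hv
    have hvt : v ≠ t := ((G.mem_neighborFinset t v).1 (mem_of_mem_erase hv)).ne'
    simp only [twoStarVector, if_neg hvt, if_neg hvw]
    split_ifs <;> ring
  rw [sum_congr rfl this, sum_add_distrib, sum_const, nsmul_eq_mul, sum_ite_mem, sum_const,
    nsmul_eq_mul]

end TwoStars

lemma five_lt_ithEig_one_signlessLaplacian (hQ : (signlessLaplacian G).IsHermitian)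
    {t w : V} (htw : t ≠ w) (ht : 6 ≤ G.degree t) (hw : 5 ≤ G.degree w)
    (h13 : 13 ≤ G.degree t + G.degree w) : 5 < ithEig hQ 1 := by
  set Nt := (G.neighborFinset t).erase w
  set Nw := (G.neighborFinset w).erase t
  set e : ℕ := if G.Adj t w then 1 else 0
  have hNt : #Nt + e = G.degree t := G.card_erase_neighborFinset_add_ite t w
  have hNw : #Nw + e = G.degree w := by
    simpa only [e, G.adj_comm t w] using G.card_erase_neighborFinset_add_ite w t
  have he : (e : ℝ) = 0 ∨ (e : ℝ) = 1 := by by_cases h : G.Adj t w <;> simp [e, h]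
  refine hQ.lt_ithEig_one_of_forall (Pi.single t 1) (G.twoStarVector t w 0 1) fun α β hαβ => ?_
  have hite : (if G.Adj t w then (α + 8 * β) ^ 2 else 0) = (e : ℝ) * (α + 8 * β) ^ 2 := by
    by_cases h : G.Adj t w <;> simp [e, h]
  rw [← twoStarVector_eq_add]
  calc 5 * (G.twoStarVector t w α β ⬝ᵥ G.twoStarVector t w α β)
      = 5 * (α ^ 2 + 64 * β ^ 2 + #Nw * β ^ 2) := by rw [G.dotProduct_self_twoStarVector α β htw]
    _ < e * (α + 8 * β) ^ 2 + #Nw * (9 * β) ^ 2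
          + (#Nt * α ^ 2 + #(Nt ∩ Nw) * ((α + β) ^ 2 - α ^ 2)) := by
      refine five_mul_lt_two_stars he ?_ ?_ ?_ (Nat.cast_nonneg _)
        (by exact_mod_cast card_le_card inter_subset_left)
        (by exact_mod_cast card_le_card inter_subset_right) hαβ
      · exact_mod_cast (hNt ▸ ht : 6 ≤ #Nt + e)
      · exact_mod_cast (hNw ▸ hw : 5 ≤ #Nw + e)
      · exact_mod_cast (show 13 ≤ #Nt + #Nw + 2 * e by omega)
    _ = ∑ v ∈ G.neighborFinset w, (G.twoStarVector t w α β w + G.twoStarVector t w α β v) ^ 2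
        + ∑ v ∈ Nt, (G.twoStarVector t w α β t + G.twoStarVector t w α β v) ^ 2 := by
      rw [G.sum_neighborFinset_twoStarVector α β htw,
        G.sum_erase_neighborFinset_twoStarVector α β, hite]
    _ ≤ _ := G.sum_sq_add_sum_sq_le_dotProduct_signlessLaplacian_mulVec htw _

lemma dotProduct_signlessLaplacian_mulVec_single (p : V) :
    Pi.single p 1 ⬝ᵥ signlessLaplacian G *ᵥ Pi.single p 1 = G.degree p := by
  simp [signlessLaplacian, single_dotProduct]

lemma dotProduct_signlessLaplacian_mulVec_single_sub_single {p q : V} (hpq : G.Adj p q) :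
    (Pi.single p 1 - Pi.single q 1) ⬝ᵥ signlessLaplacian G *ᵥ (Pi.single p 1 - Pi.single q 1)
      = G.degree p + G.degree q - 2 := by
  simp [signlessLaplacian, single_dotProduct, mulVec_sub, sub_dotProduct,
    dotProduct_sub, hpq, hpq.symm, hpq.ne, hpq.ne']
  ring

lemma exists_ne_zero_dotProduct_signlessLaplacian_mulVec_eq_zero {p : V}
    (hp : #{v | G.Reachable p v} ≤ 2) :
    ∃ x ≠ 0, x ⬝ᵥ signlessLaplacian G *ᵥ x = 0 := by
  rcases Nat.eq_zero_or_pos (G.degree p) with h0 | hpos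
  · exact ⟨Pi.single p 1, by simp, by rw [dotProduct_signlessLaplacian_mulVec_single, h0]; simp⟩
  obtain ⟨q, hpq⟩ := (G.degree_pos_iff_exists_adj p).1 hpos
  set R : Finset V := {v | G.Reachable p v}
  have hR : R = {p, q} := by
    refine (eq_of_subset_of_card_le (fun v hv => ?_) ?_).symm
    · rcases mem_insert.1 hv with rfl | hv
      · simp [R]
      · simp [R, mem_singleton.1 hv, hpq.reachable]
    · rwa [card_pair hpq.ne]
  have hdeg : ∀ a ∈ R, G.degree a = 1 := by
    intro a ha
    have hsub : G.neighborFinset a ⊆ R.erase a := fun b hb => by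
      rw [mem_neighborFinset] at hb
      simp only [R, mem_erase, mem_filter, mem_univ, true_and] at ha ⊢
      exact ⟨hb.ne', ha.trans hb.reachable⟩
    have hle := card_le_card hsub
    rw [card_erase_of_mem ha, hR, card_pair hpq.ne, card_neighborFinset_eq_degree] at hle
    have : 0 < G.degree a := by
      rw [hR, mem_insert, mem_singleton] at ha
      rcases ha with rfl | rfl
      exacts [hpq.degree_pos_left, hpq.degree_pos_right]
    omega
  refine ⟨Pi.single p 1 - Pi.single q 1, fun h => ?_, ?_⟩
  · simpa [hpq.ne] using congrFun h p
  · rw [dotProduct_signlessLaplacian_mulVec_single_sub_single G hpq, hdeg p (by simp [hR]),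
      hdeg q (by simp [hR])]
    norm_num

lemma connected_of_ithEig_pred_card_pos (hQ : (signlessLaplacian G).IsHermitian)
    (hpos : 0 < ithEig hQ (Fintype.card V - 1)) {t : V} (ht : Fintype.card V - 3 ≤ G.degree t) :
    G.Connected := by
  refine (connected_iff_exists_forall_reachable G).2 ⟨t, fun p => ?_⟩
  by_contra htp
  set Rt : Finset V := {v | G.Reachable t v}
  set Rp : Finset V := {v | G.Reachable p v}
  have hdisj : Disjoint Rt Rp := by
    simp only [Rt, Rp, Finset.disjoint_left, mem_filter, mem_univ, true_and]
    exact fun v htv hpv => htp (htv.trans hpv.symm)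
  have hnbhd : insert t (G.neighborFinset t) ⊆ Rt := by
    intro v hv
    rcases mem_insert.1 hv with rfl | hv
    · simp [Rt]
    · simpa [Rt] using ((G.mem_neighborFinset t v).1 hv).reachable
  have hcard := card_le_card hnbhd
  rw [card_insert_of_notMem (by simp), card_neighborFinset_eq_degree] at hcard
  have := card_union_of_disjoint hdisj ▸ card_le_univ (Rt ∪ Rp)
  obtain ⟨x, hx, hqx⟩ := G.exists_ne_zero_dotProduct_signlessLaplacian_mulVec_eq_zero
    (show #Rp ≤ 2 by omega)
  exact (hQ.dotProduct_mulVec_pos hpos hx).ne' hqx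

end SimpleGraph

theorem structure_from_spectrum_general {V : Type*} [Fintype V] [DecidableEq V]
    (G : SimpleGraph V) (n : ℕ) (hn : n = Fintype.card V) (h12 : 12 ≤ n)
    (hQ : (signlessLaplacian G).IsHermitian)
    (hpos : 0 < ithEig hQ (n - 1)) (hk2 : ithEig hQ 1 ≤ 5)
    (hk1 : (n : ℝ) < ithEig hQ 0) :
    G.Connected ∧ ∃ v : V, n - 3 ≤ G.degree v ∧ ∀ w, w ≠ v → G.degree w ≤ 4 := by
  subst hn
  have : Nonempty V := Fintype.card_pos_iff.1 (by omega)
  obtain ⟨t, -, ht⟩ := exists_max_image univ (G.degree ·) univ_nonempty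
  obtain ⟨w, hw, hwmax⟩ := exists_max_image (univ.erase t) (G.degree ·)
    (by rw [← card_pos, card_erase_of_mem (mem_univ t), card_univ]; omega)
  have hrest : ∀ u ≠ t, G.degree u ≤ G.degree w := fun u hu => hwmax u (by simpa using hu)
  have hκ₁ : ithEig hQ 0 ≤ G.degree t + G.degree w := by
    refine G.ithEig_zero_signlessLaplacian_le hQ (by positivity) fun u v huv => ?_
    rcases eq_or_ne u t with rfl | hut
    · exact_mod_cast Nat.add_le_add_left (hrest v huv.ne') _
    · exact_mod_cast (Nat.add_le_add (hrest u hut) (ht v (mem_univ v))).trans_eq (add_comm _ _)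
  have hdeg : Fintype.card V < G.degree t + G.degree w := by exact_mod_cast hk1.trans_le hκ₁
  have hw4 : G.degree w ≤ 4 := by
    by_contra! hw5
    have := ht w (mem_univ w)
    exact hk2.not_gt (G.five_lt_ithEig_one_signlessLaplacian hQ (ne_of_mem_erase hw).symm
      (by omega) hw5 (by omega))
  have ht3 : Fintype.card V - 3 ≤ G.degree t := by omega
  exact ⟨G.connected_of_ithEig_pred_card_pos hQ hpos ht3, t, ht3, fun u hu => (hrest u hu).trans hw4⟩

theorem structure_from_spectrum {V : Type*} [Fintype V] [DecidableEq V]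
    (G : SimpleGraph V) (n : ℕ) (hn : n = Fintype.card V) (h12 : 12 ≤ n)
    (hQ : (signlessLaplacian G).IsHermitian)
    (hpos : 0 < ithEig hQ (n - 1)) (hk2 : ithEig hQ 1 ≤ 5)
    (h5n : (5 : ℝ) < n) (hk1 : (n : ℝ) < ithEig hQ 0) :
    G.Connected ∧ ∃ v : V, n - 3 ≤ G.degree v ∧ ∀ w, w ≠ v → G.degree w ≤ 4 :=
  structure_from_spectrum_general G n hn h12 hQ hpos hk2 hk1
end

section
/- Let G = K_1 ∨ (C_{l_1} ∪ ... ∪ C_{l_t} ∪ s K_1) with s, t ≥ 1 and order n. Then the multiplicity of 1 as a signless Laplacian eigenvalue of G equals s − 1 plus the number of even cycles among C_{l_1}, ..., C_{l_t}. -/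
open SimpleGraph Matrix Finset
attribute [local instance] Classical.propDecidable
set_option linter.unnecessarySimpa false

/-! ### Auxiliary lemmas -/

section Aux

lemma aux_ne {n : ℕ} (hn : 3 ≤ n) (v : Fin n) :
    haveI : NeZero n := ⟨by omega⟩
    v - 1 ≠ v + 1 := by
  obtain ⟨k, rfl⟩ := Nat.exists_eq_add_of_le' hn
  intro h
  rw [sub_eq_iff_eq_add, add_assoc] at h
  have h2 := left_eq_add.mp h
  have h3 := congrArg Fin.val h2
  rw [Fin.val_add, Fin.val_one, Fin.val_zero, Nat.mod_eq_of_lt (by omega)] at h3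
  omega

lemma cyc_sum {n : ℕ} (hn : 3 ≤ n) (v : Fin n) (f : Fin n → ℝ) :
    haveI : NeZero n := ⟨by omega⟩
    ∑ w, (if (cycleGraph n).Adj v w then f w else 0) = f (v - 1) + f (v + 1) := by
  have hne := aux_ne hn v
  obtain ⟨k, rfl⟩ := Nat.exists_eq_add_of_le' hn
  have h1 : (Finset.univ.filter (fun w => (cycleGraph (k + 3)).Adj v w)) = {v - 1, v + 1} := by
    rw [← neighborFinset_eq_filter, cycleGraph_neighborFinset]
  rw [← Finset.sum_filter, h1, Finset.sum_pair hne]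

open Fin.NatCast Fin.CommRing in
lemma cyc_solve {n : ℕ} (hn : 3 ≤ n) (X : Fin n → ℝ)
    (hrec : ∀ v : Fin n,
      haveI : NeZero n := ⟨by omega⟩
      2 * X v + X (v - 1) + X (v + 1) = 0) :
    (∀ v : Fin n, X v = (-1 : ℝ)^(v.val) * X ⟨0, by omega⟩) ∧
      (¬ Even n → X ⟨0, by omega⟩ = 0) := by
  haveI : NeZero n := ⟨by omega⟩
  set y : ℕ → ℝ := fun m => X (m : Fin n) with hy
  have h0 : (⟨0, by omega⟩ : Fin n) = ((0 : ℕ) : Fin n) := by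
    simp [Fin.ext_iff]
  set z : ℝ := y 0 + y 1 with hz
  have hyrec : ∀ m : ℕ, y (m + 2) = -2 * y (m + 1) - y m := by
    intro m
    have h := hrec ((m + 1 : ℕ) : Fin n)
    have e1 : ((m + 1 : ℕ) : Fin n) - 1 = ((m : ℕ) : Fin n) := by push_cast; ring
    have e2 : ((m + 1 : ℕ) : Fin n) + 1 = ((m + 2 : ℕ) : Fin n) := by push_cast; ring
    rw [e1, e2] at h
    simp only [hy]
    linarith
  have hform : ∀ m : ℕ, y m = (-1 : ℝ)^m * (y 0 - m * z) := by
    intro m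
    induction m using Nat.twoStepInduction with
    | zero => simp
    | one => simp [hz]
    | more m ih1 ih2 =>
      rw [hyrec m, ih1, ih2]
      push_cast
      ring
  have hper : ∀ m : ℕ, y (m + n) = y m := by
    intro m
    simp only [hy]
    congr 1
    push_cast
    simp
  have p0 : (-1:ℝ)^n * (y 0 - n * z) = y 0 := by
    have h := hper 0
    rw [hform (0 + n)] at h
    simpa using h
  have p1 : (-1:ℝ)^(1+n) * (y 0 - (1 + n : ℕ) * z) = y 1 := by
    have h := hper 1
    rw [hform (1 + n)] at h
    exact h
  have hy1 : y 1 = z - y 0 := by rw [hz]; ring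
  have hz0 : z = 0 ∧ (¬ Even n → y 0 = 0) := by
    have hnne : (n : ℝ) ≠ 0 := by positivity
    rcases Nat.even_or_odd n with he | ho
    · rw [he.neg_one_pow, one_mul] at p0
      have hnz : (n : ℝ) * z = 0 := by linarith
      rcases mul_eq_zero.mp hnz with h' | h'
      · exact absurd h' hnne
      · exact ⟨h', fun hh => absurd he hh⟩
    · rw [ho.neg_one_pow] at p0
      have h2 : (-1 : ℝ) ^ (1 + n) = 1 := by
        have : Even (1 + n) := by simpa [Nat.even_add_one, Nat.add_comm] using ho
        exact this.neg_one_pow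
      rw [h2, one_mul, hy1] at p1
      push_cast at p0 p1
      have hzz : z = 0 := by linear_combination (-(1:ℝ)/2) * p0 + (-(1:ℝ)/2) * p1
      have hy00 : y 0 = 0 := by
        rw [hzz] at p0
        linarith
      exact ⟨hzz, fun _ => hy00⟩
  obtain ⟨hz0', hodd⟩ := hz0
  constructor
  · intro v
    have hv : X v = y v.val := by simp [hy, Fin.cast_val_eq_self]
    rw [hv, hform v.val, hz0', h0, show X ((0:ℕ) : Fin n) = y 0 from rfl]
    ring
  · intro h
    rw [h0]
    exact hodd h

lemma alt_pow_add {n : ℕ} (hn : 3 ≤ n) (he : Even n) (v : Fin n) :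
    haveI : NeZero n := ⟨by omega⟩
    (-1 : ℝ)^((v + 1).val) = -(-1 : ℝ)^(v.val) ∧
      (-1 : ℝ)^((v - 1).val) = -(-1 : ℝ)^(v.val) := by
  haveI : NeZero n := ⟨by omega⟩
  obtain ⟨j, rfl⟩ := he
  have hone : ((1 : Fin (j + j)).val) = 1 := by
    rw [Fin.val_one', Nat.mod_eq_of_lt (by omega)]
  have hdvd : (2 : ℕ) ∣ (j + j) := ⟨j, by ring⟩
  have hv1 : ((v + 1).val) % 2 = (v.val + 1) % 2 := by
    rw [Fin.val_add, hone, Nat.mod_mod_of_dvd _ hdvd]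
  have hv2 : ((v - 1).val) % 2 = (v.val + 1) % 2 := by
    rw [Fin.sub_def]
    simp only [hone]
    rw [Nat.mod_mod_of_dvd _ hdvd]
    have : v.val < j + j := v.isLt
    omega
  constructor
  · rw [neg_one_pow_eq_pow_mod_two, hv1, ← neg_one_pow_eq_pow_mod_two, pow_succ]
    ring
  · rw [neg_one_pow_eq_pow_mod_two, hv2, ← neg_one_pow_eq_pow_mod_two, pow_succ]
    ring

lemma alt_sum {n : ℕ} (he : Even n) :
    ∑ v : Fin n, (-1 : ℝ)^(v.val) = 0 := by
  rw [Fin.sum_univ_eq_sum_range (fun m => (-1 : ℝ)^m)]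
  rw [neg_one_geom_sum]
  simp [he]

variable {α β : Type*} {G : SimpleGraph α} {H : SimpleGraph β}

@[simp] lemma joinG_adj_ll {a b : α} : (joinG G H).Adj (Sum.inl a) (Sum.inl b) ↔ G.Adj a b := Iff.rfl
@[simp] lemma joinG_adj_lr {a : α} {b : β} : (joinG G H).Adj (Sum.inl a) (Sum.inr b) ↔ True := Iff.rfl
@[simp] lemma joinG_adj_rl {a : β} {b : α} : (joinG G H).Adj (Sum.inr a) (Sum.inl b) ↔ True := Iff.rfl
@[simp] lemma joinG_adj_rr {a b : β} : (joinG G H).Adj (Sum.inr a) (Sum.inr b) ↔ H.Adj a b := Iff.rfl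
@[simp] lemma sumG_adj_ll {a b : α} : (sumG G H).Adj (Sum.inl a) (Sum.inl b) ↔ G.Adj a b := Iff.rfl
@[simp] lemma sumG_adj_lr {a : α} {b : β} : (sumG G H).Adj (Sum.inl a) (Sum.inr b) ↔ False := Iff.rfl
@[simp] lemma sumG_adj_rl {a : β} {b : α} : (sumG G H).Adj (Sum.inr a) (Sum.inl b) ↔ False := Iff.rfl
@[simp] lemma sumG_adj_rr {a b : β} : (sumG G H).Adj (Sum.inr a) (Sum.inr b) ↔ H.Adj a b := Iff.rfl

@[simp] lemma cyclesUnion_adj_same {t : ℕ} {l : Fin t → ℕ} {i : Fin t} {v w : Fin (l i)} :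
    (cyclesUnion t l).Adj ⟨i, v⟩ ⟨i, w⟩ ↔ (cycleGraph (l i)).Adj v w :=
  ⟨fun ⟨_, hadj⟩ => hadj, fun h => ⟨rfl, h⟩⟩

lemma cyclesUnion_adj_ne {t : ℕ} {l : Fin t → ℕ} {i j : Fin t} (hne : i ≠ j)
    {v : Fin (l i)} {w : Fin (l j)} : ¬ (cyclesUnion t l).Adj ⟨i, v⟩ ⟨j, w⟩ :=
  fun ⟨h, _⟩ => hne h

end Aux

section Main

variable (t s : ℕ) (l : Fin t → ℕ)

/-- Vertex type. -/
abbrev VV := Unit ⊕ ((Σ i : Fin t, Fin (l i)) ⊕ Fin s)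

/-- The graph in question. -/
abbrev GG : SimpleGraph (VV t s l) :=
  joinG (⊥ : SimpleGraph Unit) (sumG (cyclesUnion t l) (⊥ : SimpleGraph (Fin s)))

variable {t s l}

lemma S_pend (x : VV t s l → ℝ) (p : Fin s) :
    ∑ w, (if (GG t s l).Adj (Sum.inr (Sum.inr p)) w
        then x (Sum.inr (Sum.inr p)) + x w else 0)
      = x (Sum.inr (Sum.inr p)) + x (Sum.inl ()) := by
  rw [Fintype.sum_sum_type, Fintype.sum_sum_type]
  simp

lemma S_apex (x : VV t s l → ℝ) :
    ∑ w, (if (GG t s l).Adj (Sum.inl ()) w then x (Sum.inl ()) + x w else 0)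
      = ∑ b : (Σ i : Fin t, Fin (l i)) ⊕ Fin s, (x (Sum.inl ()) + x (Sum.inr b)) := by
  rw [Fintype.sum_sum_type]
  simp

lemma S_cyc (hl : ∀ i, 3 ≤ l i) (x : VV t s l → ℝ) (i : Fin t) (v : Fin (l i)) :
    haveI : NeZero (l i) := ⟨by have := hl i; omega⟩
    ∑ w, (if (GG t s l).Adj (Sum.inr (Sum.inl ⟨i, v⟩)) w
        then x (Sum.inr (Sum.inl ⟨i, v⟩)) + x w else 0)
      = 3 * x (Sum.inr (Sum.inl ⟨i, v⟩)) + x (Sum.inl ())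
        + x (Sum.inr (Sum.inl ⟨i, v - 1⟩)) + x (Sum.inr (Sum.inl ⟨i, v + 1⟩)) := by
  haveI : NeZero (l i) := ⟨by have := hl i; omega⟩
  rw [Fintype.sum_sum_type, Fintype.sum_sum_type]
  have hC : ∑ c : Σ j : Fin t, Fin (l j),
      (if (GG t s l).Adj (Sum.inr (Sum.inl ⟨i, v⟩)) (Sum.inr (Sum.inl c))
        then x (Sum.inr (Sum.inl ⟨i, v⟩)) + x (Sum.inr (Sum.inl c)) else 0)
      = (x (Sum.inr (Sum.inl ⟨i, v⟩)) + x (Sum.inr (Sum.inl ⟨i, v - 1⟩)))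
        + (x (Sum.inr (Sum.inl ⟨i, v⟩)) + x (Sum.inr (Sum.inl ⟨i, v + 1⟩))) := by
    rw [← Finset.univ_sigma_univ, Finset.sum_sigma]
    rw [Finset.sum_eq_single_of_mem i (Finset.mem_univ i)]
    · have := cyc_sum (hl i) v
        (fun w => x (Sum.inr (Sum.inl ⟨i, v⟩)) + x (Sum.inr (Sum.inl ⟨i, w⟩)))
      simp only [joinG_adj_rr, sumG_adj_ll, cyclesUnion_adj_same]
      exact this
    · intro j _ hj
      apply Finset.sum_eq_zero
      intro w _
      simp only [joinG_adj_rr, sumG_adj_ll]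
      rw [if_neg (cyclesUnion_adj_ne (Ne.symm hj))]
  rw [hC]
  simp
  ring

lemma diag_mulVec {V : Type*} [Fintype V] {inst : DecidableEq V} (d x : V → ℝ) (v : V) :
    (@Matrix.diagonal V ℝ inst _ d).mulVec x v = d v * x v :=
  @Matrix.mulVec_diagonal V ℝ _ _ inst d x v

lemma mem_eigen_iff (x : VV t s l → ℝ) :
    x ∈ Module.End.eigenspace (Matrix.toLin' (signlessLaplacian (GG t s l))) 1 ↔
      ∀ v, ∑ w, (if (GG t s l).Adj v w then x v + x w else 0) = x v := by
  rw [Module.End.mem_eigenspace_iff, Matrix.toLin'_apply, one_smul, funext_iff]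
  apply forall_congr'
  intro v
  have key : (signlessLaplacian (GG t s l)).mulVec x v
      = ∑ w, (if (GG t s l).Adj v w then x v + x w else 0) := by
    rw [signlessLaplacian, Matrix.add_mulVec, Pi.add_apply, diag_mulVec,
      adjMatrix_mulVec_apply, ← Finset.sum_filter, ← neighborFinset_eq_filter,
      Finset.sum_add_distrib, Finset.sum_const, nsmul_eq_mul]
    rfl
  rw [key]


variable (t s l) in
/-- The sum functional on pendant coordinates. -/
noncomputable def Lsum : (Fin s → ℝ) →ₗ[ℝ] ℝ where
  toFun := fun p => ∑ q, p q
  map_add' := fun a b => by simp [Finset.sum_add_distrib]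
  map_smul' := fun r a => by simp [Finset.mul_sum]

@[simp] lemma Lsum_apply (p : Fin s → ℝ) : Lsum s p = ∑ q, p q := rfl

variable (t s l) in
/-- The parameter-to-eigenvector linear map. -/
noncomputable def Fmap :
    (LinearMap.ker (Lsum s) × ({i : Fin t // Even (l i)} → ℝ)) →ₗ[ℝ] (VV t s l → ℝ) where
  toFun := fun m =>
    Sum.elim (fun _ => 0)
      (Sum.elim
        (fun c => (if h : Even (l c.1) then m.2 ⟨c.1, h⟩ else 0) * (-1 : ℝ)^(c.2.val))
        (fun q => (m.1 : Fin s → ℝ) q))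
  map_add' := fun a b => by
    funext v
    rcases v with _ | (⟨i, w⟩ | q)
    · simp
    · by_cases h : Even (l i) <;> simp [h] <;> ring
    · simp
  map_smul' := fun r a => by
    funext v
    rcases v with _ | (⟨i, w⟩ | q)
    · simp
    · by_cases h : Even (l i) <;> simp [h] <;> ring
    · simp

@[simp] lemma Fmap_apply_u (m) : Fmap t s l m (Sum.inl ()) = 0 := rfl
@[simp] lemma Fmap_apply_c (m) (i : Fin t) (w : Fin (l i)) :
    Fmap t s l m (Sum.inr (Sum.inl ⟨i, w⟩))
      = (if h : Even (l i) then m.2 ⟨i, h⟩ else 0) * (-1 : ℝ)^(w.val) := rfl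
@[simp] lemma Fmap_apply_p (m) (q : Fin s) :
    Fmap t s l m (Sum.inr (Sum.inr q)) = (m.1 : Fin s → ℝ) q := rfl

theorem mult_one_aux (t s : ℕ) (ht : 1 ≤ t) (hs : 1 ≤ s)
    (l : Fin t → ℕ) (hl : ∀ i, 3 ≤ l i) :
    Module.finrank ℝ
      ↥(Module.End.eigenspace (Matrix.toLin' (signlessLaplacian (GG t s l))) 1) =
      s - 1 + (Finset.univ.filter (fun i => Even (l i))).card := by
  have hz0 : ∀ i, 0 < l i := fun i => by have := hl i; omega
  -- sum over all cycle vertices vanishes for alternating-or-zero vectors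
  have hsig : ∀ x : VV t s l → ℝ,
      (∀ i (w : Fin (l i)), x (Sum.inr (Sum.inl ⟨i, w⟩))
        = (-1 : ℝ)^(w.val) * x (Sum.inr (Sum.inl ⟨i, ⟨0, hz0 i⟩⟩))) →
      (∀ i, ¬ Even (l i) → x (Sum.inr (Sum.inl ⟨i, ⟨0, hz0 i⟩⟩)) = 0) →
      ∑ c : Σ i : Fin t, Fin (l i), x (Sum.inr (Sum.inl c)) = 0 := by
    intro x halt hodd
    rw [← Finset.univ_sigma_univ, Finset.sum_sigma]
    apply Finset.sum_eq_zero
    intro i _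
    have h1 : ∑ w : Fin (l i), x (Sum.inr (Sum.inl ⟨i, w⟩))
        = ∑ w : Fin (l i), (-1 : ℝ)^(w.val) * x (Sum.inr (Sum.inl ⟨i, ⟨0, hz0 i⟩⟩)) :=
      Finset.sum_congr rfl (fun w _ => halt i w)
    rw [h1, ← Finset.sum_mul]
    by_cases h : Even (l i)
    · rw [alt_sum h, zero_mul]
    · rw [hodd i h, mul_zero]
  -- range Fmap = eigenspace
  have hrange : LinearMap.range (Fmap t s l)
      = Module.End.eigenspace (Matrix.toLin' (signlessLaplacian (GG t s l))) 1 := by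
    apply le_antisymm
    · rintro x ⟨m, rfl⟩
      rw [mem_eigen_iff]
      intro v
      rcases v with _ | (⟨i, w⟩ | q)
      · rw [S_apex, Fintype.sum_sum_type]
        simp only [Fmap_apply_u, zero_add]
        have h2 : ∑ c : Σ i : Fin t, Fin (l i), Fmap t s l m (Sum.inr (Sum.inl c)) = 0 := by
          apply hsig
          · intro i w
            simp only [Fmap_apply_c]
            ring
          · intro i h
            simp only [Fmap_apply_c, dif_neg h, zero_mul]
        rw [h2, zero_add]
        have h3 : ∑ q : Fin s, Fmap t s l m (Sum.inr (Sum.inr q)) = 0 := m.1.2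
        rw [h3]
        rfl
      · haveI : NeZero (l i) := ⟨by have := hl i; omega⟩
        rw [S_cyc hl]
        simp only [Fmap_apply_u, Fmap_apply_c]
        by_cases h : Even (l i)
        · obtain ⟨ha1, ha2⟩ := alt_pow_add (hl i) h w
          rw [ha1, ha2]
          ring
        · rw [dif_neg h]
          ring
      · rw [S_pend]
        simp
    · intro x hx
      rw [mem_eigen_iff] at hx
      have hu0 : x (Sum.inl ()) = 0 := by
        have h := hx (Sum.inr (Sum.inr (⟨0, hs⟩ : Fin s)))
        rw [S_pend] at h
        linarith
      have hsolve : ∀ i : Fin t,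
          (∀ w : Fin (l i), x (Sum.inr (Sum.inl ⟨i, w⟩))
            = (-1 : ℝ)^(w.val) * x (Sum.inr (Sum.inl ⟨i, ⟨0, hz0 i⟩⟩))) ∧
            (¬ Even (l i) → x (Sum.inr (Sum.inl ⟨i, ⟨0, hz0 i⟩⟩)) = 0) := by
        intro i
        haveI : NeZero (l i) := ⟨by have := hl i; omega⟩
        have hrec : ∀ w : Fin (l i),
            2 * x (Sum.inr (Sum.inl ⟨i, w⟩)) + x (Sum.inr (Sum.inl ⟨i, w - 1⟩))
              + x (Sum.inr (Sum.inl ⟨i, w + 1⟩)) = 0 := by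
          intro w
          have h := hx (Sum.inr (Sum.inl ⟨i, w⟩))
          rw [S_cyc hl] at h
          rw [hu0] at h
          linarith
        exact cyc_solve (hl i) (fun w => x (Sum.inr (Sum.inl ⟨i, w⟩))) hrec
      have hpend : ∑ q : Fin s, x (Sum.inr (Sum.inr q)) = 0 := by
        have h := hx (Sum.inl ())
        rw [S_apex] at h
        rw [hu0] at h
        simp only [zero_add] at h
        rw [Fintype.sum_sum_type] at h
        have h2 : ∑ c : Σ i : Fin t, Fin (l i), x (Sum.inr (Sum.inl c)) = 0 :=
          hsig x (fun i w => (hsolve i).1 w) (fun i hh => (hsolve i).2 hh)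
        rw [h2, zero_add] at h
        exact h
      refine ⟨(⟨fun q => x (Sum.inr (Sum.inr q)), hpend⟩,
        fun j => x (Sum.inr (Sum.inl ⟨j.1, ⟨0, hz0 j.1⟩⟩))), ?_⟩
      funext v
      rcases v with _ | (⟨i, w⟩ | q)
      · exact hu0.symm
      · rw [Fmap_apply_c]
        by_cases h : Even (l i)
        · rw [dif_pos h, (hsolve i).1 w]
          ring
        · rw [dif_neg h, zero_mul]
          have e1 := (hsolve i).1 w
          rw [(hsolve i).2 h, mul_zero] at e1
          exact e1.symm
      · rfl
  -- Fmap is injective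
  have hinj : Function.Injective (Fmap t s l) := by
    rw [← LinearMap.ker_eq_bot, LinearMap.ker_eq_bot']
    intro m hm
    have h1 : m.1 = 0 := by
      apply Subtype.ext
      funext q
      have := congrFun hm (Sum.inr (Sum.inr q))
      simpa using this
    have h2 : m.2 = 0 := by
      funext j
      have h := congrFun hm (Sum.inr (Sum.inl ⟨j.1, ⟨0, hz0 j.1⟩⟩))
      rw [Fmap_apply_c, dif_pos j.2] at h
      simpa using h
    exact Prod.ext h1 h2
  -- conclude
  rw [← hrange, LinearMap.finrank_range_of_inj hinj]
  rw [Module.finrank_prod]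
  have hK : Module.finrank ℝ (LinearMap.ker (Lsum s)) = s - 1 := by
    have hs0 : (s : ℝ) ≠ 0 := by positivity
    have hsurj : Function.Surjective (Lsum s) := by
      intro r
      refine ⟨fun _ => r / s, ?_⟩
      rw [Lsum_apply, Finset.sum_const, Finset.card_univ, Fintype.card_fin, nsmul_eq_mul]
      field_simp
    have hrn := LinearMap.finrank_range_add_finrank_ker (Lsum s)
    rw [LinearMap.range_eq_top.mpr hsurj, finrank_top, Module.finrank_self] at hrn
    have hfull : Module.finrank ℝ (Fin s → ℝ) = s := by
      rw [Module.finrank_pi]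
      simp
    rw [hfull] at hrn
    omega
  have hJ : Module.finrank ℝ ({i : Fin t // Even (l i)} → ℝ)
      = (Finset.univ.filter (fun i => Even (l i))).card := by
    rw [Module.finrank_pi]
    rw [Fintype.card_subtype]
  rw [hK, hJ]

end Main

theorem mult_one_of_join_cycles (t s : ℕ) (ht : 1 ≤ t) (hs : 1 ≤ s)
    (l : Fin t → ℕ) (hl : ∀ i, 3 ≤ l i) :
    Module.finrank ℝ
      ↥(Module.End.eigenspace (Matrix.toLin' (signlessLaplacian
        (joinG (⊥ : SimpleGraph Unit)
          (sumG (cyclesUnion t l) (⊥ : SimpleGraph (Fin s)))))) 1) =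
      s - 1 + (Finset.univ.filter (fun i => Even (l i))).card :=
  mult_one_aux t s ht hs l hl
end
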